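/- arXiv:1307.5088 — 7 statements merged into one kernel-verified Lean document; each statement's English description precedes it below -/
import Mathlib

section
/- Let f be holomorphic in the unit disc D such that there is C > 0 with Area{z ∈ D : |f(z)| > λ(1−|z|)} ≤ C/λ for all λ > 0. Then f belongs to the weak Hardy space H^1_w; in fact the boundary values satisfy |{e^{iθ} ∈ ∂D : |f(e^{iθ})| > λ}| ≤ (1 + 8C)/λ for all λ > 0. -/
/-!
If the radial limit `g θ` exceeds `λ`, then `‖f‖ ≥ λ` on a final stretch `(1 - δ, 1)` of the
radius through `θ` for every small `δ`. Sweeping the set `E_δ` of such angles over the annulus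
`1 - δ < r < 1` in polar coordinates gives a region of area at least `(1 - δ) δ |E_δ|` on which
`‖f z‖ > (λ / δ) (1 - ‖z‖)`, so its area is at most `C δ / λ`. Hence `|E_δ| ≤ 2C / λ` for
`δ ≤ 1/2`, and the sets `E_δ` increase, as `δ ↓ 0`, to a set containing almost all angles with
`‖g θ‖ > λ`; thus that set has measure at most `2C / λ ≤ (1 + 8C) / λ`.
-/

open MeasureTheory Real Set Filter Topology

noncomputable section

theorem circleMap_mem_ball (c : ℂ) {R r : ℝ} (hR : 0 ≤ R) (hRr : R < r) (θ : ℝ) :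
    circleMap c R θ ∈ Metric.ball c r :=
  Metric.sphere_subset_ball hRr (circleMap_mem_sphere c hR θ)

namespace Complex

theorem polarCoord_symm_eq_circleMap (p : ℝ × ℝ) :
    Complex.polarCoord.symm p = circleMap 0 p.1 p.2 := by
  rw [Complex.polarCoord_symm_apply, circleMap_zero, Complex.exp_mul_I, ← Complex.ofReal_cos,
    ← Complex.ofReal_sin]

theorem volume_polarCoord_symm_image {s : Set (ℝ × ℝ)} (hs : MeasurableSet s)
    (hinj : InjOn Complex.polarCoord.symm s) :
    volume (Complex.polarCoord.symm '' s) = ∫⁻ p in s, ENNReal.ofReal |p.1| := by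
  have hcomp : ⇑Complex.polarCoord.symm = measurableEquivRealProd.symm ∘ polarCoord.symm := rfl
  rw [hcomp] at hinj ⊢
  rw [image_comp, MeasurableEquiv.image_symm,
    volume_preserving_equiv_real_prod.measure_preimage_equiv,
    ← lintegral_abs_det_fderiv_eq_addHaar_image volume hs
      (fun p _ => (hasFDerivAt_polarCoord_symm p).hasFDerivWithinAt) hinj.of_comp]
  simp_rw [det_fderivPolarCoordSymm]

theorem injOn_polarCoord_symm_Ioi_prod {E : Set ℝ} (hE : InjOn (circleMap 0 1) E) :
    InjOn Complex.polarCoord.symm (Ioi 0 ×ˢ E) := by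
  rintro ⟨r, θ⟩ ⟨hr, hθ⟩ ⟨r', θ'⟩ ⟨hr', hθ'⟩ h
  rw [polarCoord_symm_eq_circleMap, polarCoord_symm_eq_circleMap] at h
  have hrr' : r = r' := by
    simpa [abs_of_pos (show (0:ℝ) < r from hr), abs_of_pos (show (0:ℝ) < r' from hr')]
      using congrArg norm h
  subst hrr'
  have hcircle : circleMap 0 1 θ = circleMap 0 1 θ' := by
    simpa [circleMap_zero, (show (0:ℝ) < r from hr).ne'] using h
  rw [show θ = θ' from hE hθ hθ' hcircle]

theorem ofReal_mul_volume_le_volume_polarCoord_symm_image {a b : ℝ} (ha : 0 ≤ a) {E : Set ℝ}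
    (hE : MeasurableSet E) (hinj : InjOn (circleMap 0 1) E) :
    ENNReal.ofReal (a * (b - a)) * volume E ≤
      volume (Complex.polarCoord.symm '' Ioo a b ×ˢ E) := by
  have hs : MeasurableSet (Ioo a b ×ˢ E) := measurableSet_Ioo.prod hE
  rw [volume_polarCoord_symm_image hs ((injOn_polarCoord_symm_Ioi_prod hinj).mono
    (prod_mono (fun r hr => ha.trans_lt hr.1) le_rfl))]
  calc ENNReal.ofReal (a * (b - a)) * volume E
      = ∫⁻ _ in Ioo a b ×ˢ E, ENNReal.ofReal a := by
        rw [setLIntegral_const, Measure.volume_eq_prod, Measure.prod_prod, Real.volume_Ioo,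
          ENNReal.ofReal_mul ha, mul_assoc]
    _ ≤ ∫⁻ p in Ioo a b ×ˢ E, ENNReal.ofReal |p.1| :=
        setLIntegral_mono (by fun_prop) fun p hp =>
          ENNReal.ofReal_le_ofReal (hp.1.1.le.trans (le_abs_self _))

end Complex

def radialSuperlevelSet (f : ℂ → ℂ) (lam δ : ℝ) : Set ℝ :=
  {θ | ∀ r ∈ Ioo (1 - δ) 1, lam ≤ ‖f (circleMap 0 r θ)‖}

section RadialSuperlevelSet

variable {f : ℂ → ℂ} {lam δ : ℝ}

theorem radialSuperlevelSet_antitone : Antitone (radialSuperlevelSet f lam) :=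
  fun _ _ hδ _ hθ r hr => hθ r ⟨by linarith [hr.1], hr.2⟩

theorem isClosed_radialSuperlevelSet (hf : ContinuousOn f (Metric.ball 0 1)) (hδ : δ ≤ 1) :
    IsClosed (radialSuperlevelSet f lam δ) := by
  simp only [radialSuperlevelSet, ofPred_forall]
  refine isClosed_biInter fun r hr => isClosed_le continuous_const ?_
  exact (hf.comp_continuous (continuous_circleMap 0 r)
    (circleMap_mem_ball 0 (by linarith [hr.1]) hr.2)).norm

theorem eventually_mem_radialSuperlevelSet {θ : ℝ} {w : ℂ}
    (hlim : Tendsto (fun r : ℝ => f (circleMap 0 r θ)) (𝓝[<] 1) (𝓝 w)) (hw : lam < ‖w‖) :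
    ∀ᶠ δ in 𝓝[>] 0, θ ∈ radialSuperlevelSet f lam δ := by
  obtain ⟨l, hl, hlarge⟩ := (nhdsLT_basis_of_exists_lt ⟨0, zero_lt_one⟩).eventually_iff.1
    (hlim.norm.eventually (eventually_ge_nhds hw))
  filter_upwards [Ioo_mem_nhdsGT (sub_pos.2 hl)] with δ hδ r hr
  exact hlarge ⟨by linarith [hδ.2, hr.1], hr.2⟩

theorem exists_nat_mem_radialSuperlevelSet {θ : ℝ} {w : ℂ}
    (hlim : Tendsto (fun r : ℝ => f (circleMap 0 r θ)) (𝓝[<] 1) (𝓝 w)) (hw : lam < ‖w‖) :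
    ∃ n : ℕ, θ ∈ radialSuperlevelSet f lam (1 / (n + 2)) := by
  have hδ : Tendsto (fun n : ℕ => 1 / ((n : ℝ) + 2)) atTop (𝓝[>] 0) := by
    refine tendsto_nhdsWithin_iff.2 ⟨?_, Eventually.of_forall fun n => ?_⟩
    · exact tendsto_const_nhds.div_atTop
        (tendsto_atTop_add_const_right _ 2 tendsto_natCast_atTop_atTop)
    · exact mem_Ioi.2 (by positivity)
  exact (hδ.eventually (eventually_mem_radialSuperlevelSet hlim hw)).exists

theorem polarCoord_symm_image_subset_of_subset_radialSuperlevelSet (hlam : 0 < lam)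
    (hδ : 0 < δ) (hδ₁ : δ ≤ 1) {E : Set ℝ} (hE : E ⊆ radialSuperlevelSet f lam δ) :
    Complex.polarCoord.symm '' Ioo (1 - δ) 1 ×ˢ E ⊆
      {z ∈ Metric.ball (0:ℂ) 1 | lam / δ * (1 - ‖z‖) < ‖f z‖} := by
  rintro _ ⟨⟨r, θ⟩, ⟨hr, hθ⟩, rfl⟩
  have hr₀ : 0 < r := by linarith [hr.1]
  rw [Complex.polarCoord_symm_eq_circleMap]
  refine ⟨circleMap_mem_ball 0 hr₀.le hr.2 θ, ?_⟩
  calc lam / δ * (1 - ‖circleMap 0 r θ‖) = lam * ((1 - r) / δ) := by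
        rw [norm_circleMap_zero, abs_of_pos hr₀]; ring
    _ < lam * 1 := mul_lt_mul_of_pos_left ((div_lt_one hδ).2 (by linarith [hr.1])) hlam
    _ ≤ ‖f (circleMap 0 r θ)‖ := by rw [mul_one]; exact hE hθ r hr

theorem volume_radialSuperlevelSet_inter_Ico_le {C : ℝ} (hf : ContinuousOn f (Metric.ball 0 1))
    (harea : ∀ lam > (0:ℝ),
      volume {z ∈ Metric.ball (0:ℂ) 1 | lam * (1 - ‖z‖) < ‖f z‖} ≤ ENNReal.ofReal (C / lam))
    (hlam : 0 < lam) (hδ : 0 < δ) (hδ₂ : δ ≤ 1 / 2) :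
    volume (radialSuperlevelSet f lam δ ∩ Ico 0 (2 * π)) ≤ ENNReal.ofReal (2 * C / lam) := by
  set E := radialSuperlevelSet f lam δ ∩ Ico 0 (2 * π)
  have hE : MeasurableSet E :=
    (isClosed_radialSuperlevelSet hf (by linarith)).measurableSet.inter measurableSet_Ico
  have hinj : InjOn (circleMap 0 1) E :=
    (injOn_circleMap_of_abs_sub_le' one_ne_zero (by simp)).mono inter_subset_right
  have hcoef : 0 < (1 - δ) * δ := by nlinarith
  have key : ENNReal.ofReal ((1 - δ) * δ) * volume E ≤
      ENNReal.ofReal ((1 - δ) * δ) * ENNReal.ofReal (2 * C / lam) :=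
    calc ENNReal.ofReal ((1 - δ) * δ) * volume E
        = ENNReal.ofReal ((1 - δ) * (1 - (1 - δ))) * volume E := by ring_nf
      _ ≤ volume (Complex.polarCoord.symm '' Ioo (1 - δ) 1 ×ˢ E) :=
          Complex.ofReal_mul_volume_le_volume_polarCoord_symm_image (by linarith) hE hinj
      _ ≤ volume {z ∈ Metric.ball (0:ℂ) 1 | lam / δ * (1 - ‖z‖) < ‖f z‖} :=
          measure_mono (polarCoord_symm_image_subset_of_subset_radialSuperlevelSet hlam hδ
            (by linarith) inter_subset_left)
      _ ≤ ENNReal.ofReal (C / (lam / δ)) := harea _ (by positivity)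
      _ ≤ ENNReal.ofReal ((1 - δ) * δ) * ENNReal.ofReal (2 * C / lam) := by
          rw [← ENNReal.ofReal_mul hcoef.le, ENNReal.ofReal_le_ofReal_iff', div_div_eq_mul_div,
            ← mul_div_assoc]
          rcases le_total 0 C with hC | hC
          · exact Or.inl (div_le_div_of_nonneg_right
              (by nlinarith [mul_nonneg (mul_nonneg hC hδ.le) (by linarith : (0:ℝ) ≤ 1 - 2 * δ)])
              hlam.le)
          · right; exact div_nonpos_of_nonpos_of_nonneg (by nlinarith) hlam.le
  exact (ENNReal.mul_le_mul_iff_right (by simpa using hcoef) ENNReal.ofReal_ne_top).1 key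

end RadialSuperlevelSet

theorem weak_area_bound_implies_weak_H1_general (f : ℂ → ℂ) (C : ℝ)
    (hf : DifferentiableOn ℂ f (Metric.ball 0 1))
    (harea : ∀ lam > (0:ℝ),
      volume {z ∈ Metric.ball (0:ℂ) 1 | lam * (1 - ‖z‖) < ‖f z‖} ≤ ENNReal.ofReal (C / lam)) :
    ∀ g : ℝ → ℂ,
      (∀ᵐ (θ : ℝ) ∂(volume.restrict (Set.Ico (0:ℝ) (2*π))),
        Filter.Tendsto (fun r : ℝ => f ((r:ℂ) * Complex.exp ((θ:ℂ) * Complex.I)))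
          (nhdsWithin 1 (Set.Iio 1)) (nhds (g θ))) →
      ∀ lam > (0:ℝ),
        volume {θ ∈ Set.Ico (0:ℝ) (2*π) | lam < ‖g θ‖} ≤ ENNReal.ofReal ((1 + 8*C) / lam) := by
  intro g hg lam hlam
  simp_rw [← circleMap_zero] at hg
  set S : ℕ → Set ℝ := fun n => radialSuperlevelSet f lam (1 / (n + 2)) ∩ Ico 0 (2 * π)
  have hcover : {θ ∈ Ico (0:ℝ) (2 * π) | lam < ‖g θ‖} ≤ᵐ[volume] ⋃ n, S n := by
    filter_upwards [(ae_restrict_iff' measurableSet_Ico).1 hg] with θ hlim ⟨hθ, hgθ⟩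
    obtain ⟨n, hn⟩ := exists_nat_mem_radialSuperlevelSet (hlim hθ) hgθ
    exact mem_iUnion.2 ⟨n, hn, hθ⟩
  have hmono : Monotone S := fun m n hmn =>
    inter_subset_inter_left _ (radialSuperlevelSet_antitone (by gcongr))
  calc volume {θ ∈ Ico (0:ℝ) (2 * π) | lam < ‖g θ‖}
      ≤ volume (⋃ n, S n) := measure_mono_ae hcover
    _ = ⨆ n, volume (S n) := hmono.measure_iUnion
    _ ≤ ENNReal.ofReal (2 * C / lam) := iSup_le fun n =>
        volume_radialSuperlevelSet_inter_Ico_le hf.continuousOn harea hlam (by positivity)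
          (by rw [div_le_div_iff₀ (by positivity) two_pos]; linarith [n.cast_nonneg (α := ℝ)])
    _ ≤ ENNReal.ofReal ((1 + 8 * C) / lam) := by
        rw [ENNReal.ofReal_le_ofReal_iff']
        rcases le_total 0 C with hC | hC
        · left; gcongr; linarith
        · right; exact div_nonpos_of_nonpos_of_nonneg (by linarith) hlam.le

theorem weak_area_bound_implies_weak_H1 (f : ℂ → ℂ) (C : ℝ) (hC : 0 < C)
    (hf : DifferentiableOn ℂ f (Metric.ball 0 1))
    (harea : ∀ lam > (0:ℝ),
      volume {z ∈ Metric.ball (0:ℂ) 1 | lam * (1 - ‖z‖) < ‖f z‖} ≤ ENNReal.ofReal (C / lam)) :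
    ∀ g : ℝ → ℂ,
      (∀ᵐ (θ : ℝ) ∂(volume.restrict (Set.Ico (0:ℝ) (2*π))),
        Filter.Tendsto (fun r : ℝ => f ((r:ℂ) * Complex.exp ((θ:ℂ) * Complex.I)))
          (nhdsWithin 1 (Set.Iio 1)) (nhds (g θ))) →
      ∀ lam > (0:ℝ),
        volume {θ ∈ Set.Ico (0:ℝ) (2*π) | lam < ‖g θ‖} ≤ ENNReal.ofReal ((1 + 8*C) / lam) :=
  weak_area_bound_implies_weak_H1_general f C hf harea
end
end

section
/- If f belongs to the weak Hardy space H^1_w (equivalently, its nontangential maximal function M_∢f lies in weak L^1(∂D)), then for every 1 < p < ∞, f belongs to weak L^p of the unit disc with respect to the measure dμ_p(z) = (1−|z|)^{p−2} dA(z); that is, there is C > 0 with μ_p({z ∈ D : |f(z)| > λ}) ≤ C/λ^p for all λ > 0. -/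
/-!
If `λ < |f z|` then `z` lies in the cone `Γ_α(e^{iθ})` for every `θ` within `(α - 1)(1 - |z|)` of
`arg z`, so `E_λ = {M_∢f > λ}` contains `arg z` together with an arc of length `≍ 1 - |z|`.
Hence `{|f| > λ}` lies in the sector over `E_λ` of depth `t ≲ |E_λ| ≲ 1/λ`, whose `μ_p`-measure
is at most `|E_λ| ∫_{1-t}^1 (1-r)^{p-2} dr ≲ λ⁻¹ t^{p-1} ≲ λ^{-p}`.
-/

open MeasureTheory Real Set Filter
open scoped ENNReal

noncomputable section

/-- The measure `dμ_p(z) = (1-|z|)^{p-2} dA(z)` on the unit disc. -/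
def muP (p : ℝ) : Measure ℂ :=
  (volume.restrict (Metric.ball (0:ℂ) 1)).withDensity fun z => ENNReal.ofReal ((1 - ‖z‖) ^ (p - 2))

namespace Complex

theorem norm_exp_ofReal_mul_I_sub_le (a b : ℝ) :
    ‖exp (a * I) - exp (b * I)‖ ≤ |a - b| := by
  simpa [circleMap, dist_eq, Real.dist_eq] using (lipschitzWith_circleMap 0 1).dist_le_mul a b

theorem norm_sub_exp_arg_mul_I (z : ℂ) : ‖z - exp (arg z * I)‖ = |‖z‖ - 1| := by
  have hz : z - exp (arg z * I) = ((‖z‖ - 1 : ℝ) : ℂ) * exp (arg z * I) := by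
    rw [ofReal_sub, ofReal_one, sub_one_mul, norm_mul_exp_arg_mul_I]
  rw [hz, norm_mul, norm_exp_ofReal_mul_I, mul_one, norm_real, Real.norm_eq_abs]

theorem exp_toIcoMod_mul_I (a θ : ℝ) :
    exp (toIcoMod two_pi_pos a θ * I) = exp (θ * I) := by
  rw [toIcoMod, ofReal_sub, ofReal_zsmul, ofReal_mul, ofReal_ofNat]
  exact exp_mul_I_periodic.sub_zsmul_eq _

theorem arg_polarCoord_symm {q : ℝ × ℝ} (hq : q ∈ Complex.polarCoord.target) :
    arg (Complex.polarCoord.symm q) = q.2 :=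
  congrArg Prod.snd (Complex.polarCoord.right_inv hq)

end Complex

theorem ofReal_le_volume_of_Icc_inter_Ico_subset {a b x ℓ : ℝ} {s : Set ℝ}
    (hx : x ∈ Ico a b) (hℓ₀ : 0 ≤ ℓ) (hℓ : ℓ ≤ b - a) (hs : Icc (x - ℓ) (x + ℓ) ∩ Ico a b ⊆ s) :
    ENNReal.ofReal ℓ ≤ volume s := by
  set c := min x (b - ℓ)
  have hc : x - ℓ ≤ c ∧ a ≤ c ∧ c ≤ x ∧ c ≤ b - ℓ :=
    ⟨le_min (by linarith) (by linarith [hx.2]), le_min hx.1 (by linarith),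
      min_le_left _ _, min_le_right _ _⟩
  have hsub : Ico c (c + ℓ) ⊆ s := fun y hy =>
    hs ⟨⟨by linarith [hy.1], by linarith [hy.2]⟩, by linarith [hy.1], by linarith [hy.2]⟩
  simpa using measure_mono (μ := volume) hsub

theorem volume_Ioc_inter_preimage_toIcoMod_le (s : Set ℝ) :
    volume (Ioc (-π) π ∩ toIcoMod two_pi_pos 0 ⁻¹' s) ≤ volume s := by
  have hsplit : Ioc (-π) π ∩ toIcoMod two_pi_pos 0 ⁻¹' s ⊆
      (s ∩ Iic π) ∪ (· + 2 * π) ⁻¹' (s \ Iic π) := by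
    rintro φ ⟨⟨hφl, hφr⟩, hφs⟩
    rcases le_or_gt 0 φ with h0 | h0
    · rw [mem_preimage, (toIcoMod_eq_self _).2 ⟨h0, by linarith⟩] at hφs
      exact Or.inl ⟨hφs, hφr⟩
    · rw [mem_preimage, ← toIcoMod_add_right, (toIcoMod_eq_self _).2 ⟨by linarith, by linarith⟩]
        at hφs
      exact Or.inr ⟨hφs, by simp only [mem_Iic, not_le]; linarith⟩
  calc _ ≤ volume (s ∩ Iic π) + volume ((· + 2 * π) ⁻¹' (s \ Iic π)) :=
        (measure_mono hsplit).trans (measure_union_le _ _)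
    _ = volume s := by rw [measure_preimage_add_right, measure_inter_add_sdiff s measurableSet_Iic]

theorem lintegral_Ico_one_sub_rpow {p t : ℝ} (hp : 1 < p) (ht : 0 ≤ t) :
    ∫⁻ r in Ico (1 - t) 1, ENNReal.ofReal ((1 - r) ^ (p - 2)) =
      ENNReal.ofReal (t ^ (p - 1) / (p - 1)) := by
  have hint : IntervalIntegrable (fun r : ℝ => (1 - r) ^ (p - 2)) volume (1 - t) 1 := by
    simpa using ((intervalIntegral.intervalIntegrable_rpow' (a := 0) (b := t)
      (by linarith : -1 < p - 2)).comp_sub_left 1).symm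
  have hle : 1 - t ≤ 1 := by linarith
  rw [setLIntegral_congr Ico_ae_eq_Ioc, ← ofReal_integral_eq_lintegral_ofReal
    ((intervalIntegrable_iff_integrableOn_Ioc_of_le hle).1 hint)
    ((ae_restrict_mem measurableSet_Ioc).mono fun r hr => rpow_nonneg (by linarith [hr.2]) _),
    ← intervalIntegral.integral_of_le hle,
    intervalIntegral.integral_comp_sub_left (fun x : ℝ => x ^ (p - 2)) 1,
    integral_rpow (Or.inl (by linarith)), sub_self, sub_sub_cancel,
    show p - 2 + 1 = p - 1 by ring, zero_rpow (by linarith), sub_zero]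

theorem ae_muP_mem_ball (p : ℝ) : ∀ᵐ z ∂muP p, z ∈ Metric.ball (0 : ℂ) 1 :=
  (withDensity_absolutelyContinuous _ _).ae_le (ae_restrict_mem measurableSet_ball)

theorem muP_norm_mem_Ico_arg_mem_le {p t : ℝ} (hp : 1 < p) (ht : 0 ≤ t) (S : Set ℝ) :
    muP p {z | ‖z‖ ∈ Ico (1 - t) 1 ∧ Complex.arg z ∈ S} ≤
      volume (Ioc (-π) π ∩ S) * ENNReal.ofReal (t ^ (p - 1) / (p - 1)) := by
  set S₀ := toMeasurable volume (Ioc (-π) π ∩ S)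
  set R := Ico (1 - t) 1
  set V := {z : ℂ | ‖z‖ ∈ R ∧ Complex.arg z ∈ S₀}
  set ρ : ℝ → ℝ≥0∞ := fun r => ENNReal.ofReal ((1 - r) ^ (p - 2))
  have hV : MeasurableSet V :=
    (measurableSet_Ico.preimage measurable_norm).inter
      (measurableSet_toMeasurable _ _ |>.preimage Complex.measurable_arg)
  have hVball : V ⊆ Metric.ball 0 1 := fun z hz => mem_ball_zero_iff.2 hz.1.2
  have hρ : Measurable ρ := by fun_prop
  have hpolar : ∀ q ∈ Complex.polarCoord.target,
      ENNReal.ofReal q.1 • V.indicator (ρ ‖·‖) (Complex.polarCoord.symm q) ≤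
        R.indicator ρ q.1 * S₀.indicator 1 q.2 := by
    rintro ⟨r, φ⟩ hq
    have hr : 0 < r := hq.1
    have hmem : Complex.polarCoord.symm (r, φ) ∈ V ↔ r ∈ R ∧ φ ∈ S₀ := by
      simp only [V, mem_ofPred_eq, Complex.norm_polarCoord_symm, abs_of_pos hr,
        Complex.arg_polarCoord_symm hq]
    by_cases h : r ∈ R ∧ φ ∈ S₀
    · rw [indicator_of_mem (hmem.2 h), indicator_of_mem h.1, indicator_of_mem h.2,
        Complex.norm_polarCoord_symm, abs_of_pos hr, smul_eq_mul, Pi.one_apply, mul_one]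
      exact mul_le_of_le_one_left' (ENNReal.ofReal_le_one.2 h.1.2.le)
    · rw [indicator_of_notMem (mt hmem.1 h), smul_zero]
      exact zero_le
  calc muP p {z | ‖z‖ ∈ R ∧ Complex.arg z ∈ S}
      ≤ muP p V := measure_mono fun z hz =>
        ⟨hz.1, subset_toMeasurable _ _ ⟨Complex.arg_mem_Ioc z, hz.2⟩⟩
    _ = ∫⁻ z, V.indicator (ρ ‖·‖) z := by
        rw [muP, withDensity_apply _ hV, Measure.restrict_restrict hV, inter_eq_left.2 hVball,
          lintegral_indicator hV]
    _ = ∫⁻ q in Complex.polarCoord.target,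
          ENNReal.ofReal q.1 • V.indicator (ρ ‖·‖) (Complex.polarCoord.symm q) :=
        (Complex.lintegral_comp_polarCoord_symm _).symm
    _ ≤ ∫⁻ q in Complex.polarCoord.target, R.indicator ρ q.1 * S₀.indicator 1 q.2 :=
        setLIntegral_mono' Complex.polarCoord.open_target.measurableSet hpolar
    _ ≤ ∫⁻ q : ℝ × ℝ, R.indicator ρ q.1 * S₀.indicator 1 q.2 := setLIntegral_le_lintegral _ _
    _ = (∫⁻ r in R, ρ r) * volume S₀ := by
        rw [Measure.volume_eq_prod,
          lintegral_prod_mul (hρ.indicator measurableSet_Ico).aemeasurable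
            (measurable_one.indicator (measurableSet_toMeasurable _ _)).aemeasurable,
          lintegral_indicator measurableSet_Ico,
          lintegral_indicator_one (measurableSet_toMeasurable _ _)]
    _ = _ := by rw [lintegral_Ico_one_sub_rpow hp ht, measure_toMeasurable, mul_comm]

/-- `M` majorizes the nontangential maximal function `M_∢f` of aperture `α`. -/
def IsNontangentialMajorant (f : ℂ → ℂ) (α : ℝ) (M : ℝ → ℝ) : Prop :=
  ∀ θ : ℝ, ∀ z ∈ Metric.ball (0 : ℂ) 1,
    ‖z - Complex.exp (θ * Complex.I)‖ ≤ α * (1 - ‖z‖) → ‖f z‖ ≤ M θ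

namespace IsNontangentialMajorant

variable {f : ℂ → ℂ} {α : ℝ} {M : ℝ → ℝ} {lam : ℝ} {z : ℂ}

theorem lt_apply_of_abs_sub_le (hM : IsNontangentialMajorant f α M)
    (hz : z ∈ Metric.ball 0 1) (hfz : lam < ‖f z‖) {θ₀ θ : ℝ}
    (hθ₀ : Complex.exp (θ₀ * Complex.I) = Complex.exp (Complex.arg z * Complex.I))
    (hθ : |θ - θ₀| ≤ (α - 1) * (1 - ‖z‖)) : lam < M θ := by
  refine hfz.trans_le (hM θ z hz ?_)
  have hradial : ‖z - Complex.exp (θ₀ * Complex.I)‖ = 1 - ‖z‖ := by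
    rw [hθ₀, Complex.norm_sub_exp_arg_mul_I, abs_of_neg (by linarith [mem_ball_zero_iff.1 hz]),
      neg_sub]
  have harc : ‖Complex.exp (θ₀ * Complex.I) - Complex.exp (θ * Complex.I)‖ ≤
      (α - 1) * (1 - ‖z‖) :=
    (Complex.norm_exp_ofReal_mul_I_sub_le θ₀ θ).trans (abs_sub_comm θ₀ θ ▸ hθ)
  linarith [norm_sub_le_norm_sub_add_norm_sub z (Complex.exp (θ₀ * Complex.I))
    (Complex.exp (θ * Complex.I))]

theorem toIcoMod_arg_mem (hM : IsNontangentialMajorant f α M) (hα : 1 ≤ α)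
    (hz : z ∈ Metric.ball 0 1) (hfz : lam < ‖f z‖) :
    toIcoMod two_pi_pos 0 (Complex.arg z) ∈ {θ ∈ Ico 0 (2 * π) | lam < M θ} := by
  refine ⟨by simpa using toIcoMod_mem_Ico two_pi_pos 0 (Complex.arg z),
    hM.lt_apply_of_abs_sub_le hz hfz (Complex.exp_toIcoMod_mul_I 0 _) ?_⟩
  rw [sub_self, abs_zero]
  exact mul_nonneg (by linarith) (by linarith [mem_ball_zero_iff.1 hz])

theorem ofReal_mul_one_sub_norm_le_volume (hM : IsNontangentialMajorant f α M) (hα : 1 ≤ α)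
    (hz : z ∈ Metric.ball 0 1) (hfz : lam < ‖f z‖) :
    ENNReal.ofReal (min (α - 1) (2 * π) * (1 - ‖z‖)) ≤
      volume {θ ∈ Ico 0 (2 * π) | lam < M θ} := by
  have hz₁ : 0 < 1 - ‖z‖ := by linarith [mem_ball_zero_iff.1 hz]
  have hz₂ : 1 - ‖z‖ ≤ 1 := by linarith [norm_nonneg z]
  have hc : 0 ≤ min (α - 1) (2 * π) := le_min (by linarith) two_pi_pos.le
  refine ofReal_le_volume_of_Icc_inter_Ico_subset (hM.toIcoMod_arg_mem hα hz hfz).1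
    (by positivity) ?_ fun θ hθ =>
      ⟨hθ.2, hM.lt_apply_of_abs_sub_le hz hfz (Complex.exp_toIcoMod_mul_I 0 _) ?_⟩
  · rw [sub_zero]
    exact (mul_le_of_le_one_right hc hz₂).trans (min_le_right _ _)
  · have hℓ : min (α - 1) (2 * π) * (1 - ‖z‖) ≤ (α - 1) * (1 - ‖z‖) := by
      gcongr; exact min_le_left _ _
    exact abs_le.2 ⟨by linarith [hθ.1.1], by linarith [hθ.1.2]⟩

theorem muP_lt_norm_le (hM : IsNontangentialMajorant f α M) (hα : 1 < α) {p K : ℝ}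
    (hp : 1 < p) (hK : 0 ≤ K) (hlam : 0 < lam)
    (hE : volume {θ ∈ Ico 0 (2 * π) | lam < M θ} ≤ ENNReal.ofReal (K / lam)) :
    muP p {z | lam < ‖f z‖} ≤ ENNReal.ofReal (K / lam) *
      ENNReal.ofReal ((K / min (α - 1) (2 * π) / lam) ^ (p - 1) / (p - 1)) := by
  set c := min (α - 1) (2 * π)
  have hc : 0 < c := lt_min (by linarith) two_pi_pos
  set E := {θ ∈ Ico 0 (2 * π) | lam < M θ}
  set t := K / c / lam
  have hsub : {z | lam < ‖f z‖} ≤ᵐ[muP p]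
      {z | ‖z‖ ∈ Ico (1 - t) 1 ∧ Complex.arg z ∈ toIcoMod two_pi_pos 0 ⁻¹' E} := by
    filter_upwards [ae_muP_mem_ball p] with z hz hfz
    have hdepth := (hM.ofReal_mul_one_sub_norm_le_volume hα.le hz hfz).trans hE
    rw [ENNReal.ofReal_le_ofReal_iff (by positivity)] at hdepth
    refine ⟨⟨?_, mem_ball_zero_iff.1 hz⟩, hM.toIcoMod_arg_mem hα.le hz hfz⟩
    rw [sub_le_comm, show t = K / (c * lam) from div_div _ _ _, le_div_iff₀ (by positivity)]
    linarith [(le_div_iff₀ hlam).1 hdepth]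
  calc muP p {z | lam < ‖f z‖}
      ≤ muP p {z | ‖z‖ ∈ Ico (1 - t) 1 ∧ Complex.arg z ∈ toIcoMod two_pi_pos 0 ⁻¹' E} :=
        measure_mono_ae hsub
    _ ≤ volume (Ioc (-π) π ∩ toIcoMod two_pi_pos 0 ⁻¹' E) *
          ENNReal.ofReal (t ^ (p - 1) / (p - 1)) :=
        muP_norm_mem_Ico_arg_mem_le hp (by positivity) _
    _ ≤ _ := by
        gcongr
        exact (volume_Ioc_inter_preimage_toIcoMod_le E).trans hE

end IsNontangentialMajorant

theorem weak_H1_subset_weak_Lp_general (f : ℂ → ℂ) (α : ℝ) (hα : 1 < α)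
    (hmax : ∃ (Mf : ℝ → ℝ) (Cm : ℝ),
      (∀ θ : ℝ, ∀ z ∈ Metric.ball (0:ℂ) 1,
        ‖z - Complex.exp ((θ:ℂ) * Complex.I)‖ ≤ α * (1 - ‖z‖) → ‖f z‖ ≤ Mf θ) ∧
      (∀ lam > (0:ℝ),
        ENNReal.ofReal lam * volume {θ ∈ Set.Ico (0:ℝ) (2*π) | lam < Mf θ}
          ≤ ENNReal.ofReal Cm)) :
    ∀ p : ℝ, 1 < p → ∃ C > (0:ℝ), ∀ lam > (0:ℝ),
      muP p {z | lam < ‖f z‖} ≤ ENNReal.ofReal (C / lam ^ p) := by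
  intro p hp
  obtain ⟨M, Cm, hM, hCm⟩ := hmax
  set c := min (α - 1) (2 * π)
  have hc : 0 < c := lt_min (by linarith) two_pi_pos
  set K := max Cm 0
  have hK : 0 ≤ K := le_max_right _ _
  refine ⟨K * (K / c) ^ (p - 1) / (p - 1) + 1, by positivity, fun lam hlam => ?_⟩
  have hE : volume {θ ∈ Ico 0 (2 * π) | lam < M θ} ≤ ENNReal.ofReal (K / lam) := by
    rw [ENNReal.ofReal_div_of_pos hlam, ENNReal.le_div_iff_mul_le (Or.inl (by simpa using hlam))
      (Or.inl ENNReal.ofReal_ne_top), mul_comm]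
    exact (hCm lam hlam).trans (ENNReal.ofReal_le_ofReal (le_max_left _ _))
  calc muP p {z | lam < ‖f z‖}
      ≤ ENNReal.ofReal (K / lam) * ENNReal.ofReal ((K / c / lam) ^ (p - 1) / (p - 1)) :=
        IsNontangentialMajorant.muP_lt_norm_le hM hα hp hK hlam hE
    _ = ENNReal.ofReal (K * (K / c) ^ (p - 1) / (p - 1) / lam ^ p) := by
        rw [← ENNReal.ofReal_mul (by positivity), div_rpow (by positivity) hlam.le,
          rpow_sub_one hlam.ne']
        field_simp
    _ ≤ ENNReal.ofReal ((K * (K / c) ^ (p - 1) / (p - 1) + 1) / lam ^ p) := by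
        gcongr
        linarith

theorem weak_H1_subset_weak_Lp (f : ℂ → ℂ) (α : ℝ) (hα : 1 < α)
    (hf : DifferentiableOn ℂ f (Metric.ball 0 1))
    (hmax : ∃ (Mf : ℝ → ℝ) (Cm : ℝ),
      (∀ θ : ℝ, ∀ z ∈ Metric.ball (0:ℂ) 1,
        ‖z - Complex.exp ((θ:ℂ) * Complex.I)‖ ≤ α * (1 - ‖z‖) → ‖f z‖ ≤ Mf θ) ∧
      (∀ lam > (0:ℝ),
        ENNReal.ofReal lam * volume {θ ∈ Set.Ico (0:ℝ) (2*π) | lam < Mf θ}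
          ≤ ENNReal.ofReal Cm)) :
    ∀ p : ℝ, 1 < p → ∃ C > (0:ℝ), ∀ lam > (0:ℝ),
      muP p {z | lam < ‖f z‖} ≤ ENNReal.ofReal (C / lam ^ p) :=
  weak_H1_subset_weak_Lp_general f α hα hmax
end
end

section
/- Let 1 < p < ∞ and let f be holomorphic on the unit disc D with f in weak L^p(D, μ_p), i.e. sup_{λ>0} λ^p · μ_p({z : |f(z)| > λ}) < ∞ where dμ_p = (1−|z|)^{p−2} dA. Then f belongs to the growth space A^{−1}: there exists C > 0 such that (1−|a|)|f(a)| ≤ C for all a ∈ D. -/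
open MeasureTheory Real Set Filter

noncomputable section

/-!
Fix `a ∈ 𝔻` and `r = (1 - |a|)/2`. On the disc `B(a, r)` one has `r < 1 - |z| < 3r`, so the weight
`(1 - |z|)^{p-2}` is comparable to `r^{p-2}` and the weak-type bound gives
`|{z ∈ B(a, r) : |f z| > t}| ≲ r^{2-p} t^{-p}`. Since `|f|` is subharmonic,
`π r² |f a| ≤ ∫_{B(a,r)} |f|`; computing this integral by the layer-cake formula, with the trivial
bound `π r²` for `t ≤ 1/r` and the weak-type bound for `t > 1/r`, gives `π r² |f a| ≲ r`.
-/

open Metric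
open scoped ENNReal

theorem circleMap_mem_ball_s6 (c : ℂ) {s r : ℝ} (hs : s ∈ Ioo 0 r) (θ : ℝ) :
    circleMap c s θ ∈ ball c r :=
  sphere_subset_ball hs.2 (circleMap_mem_sphere c hs.1.le θ)

theorem add_polarCoord_symm_eq_circleMap (a : ℂ) (s θ : ℝ) :
    a + Complex.polarCoord.symm (s, θ) = circleMap a s θ := by
  rw [Complex.polarCoord_symm_apply, circleMap]
  push_cast
  rw [Complex.exp_mul_I]

section MeanValue

variable {E : Type*} [NormedAddCommGroup E] [NormedSpace ℂ E] [CompleteSpace E]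

theorem DiffContOnCl.norm_le_circleAverage_norm {f : ℂ → E} {c : ℂ} {R : ℝ}
    (hf : DiffContOnCl ℂ f (ball c |R|)) : ‖f c‖ ≤ Real.circleAverage (‖f ·‖) c R := by
  rw [← hf.circleAverage, circleAverage_def, circleAverage_def, norm_smul, smul_eq_mul, norm_inv,
    Real.norm_of_nonneg (by positivity)]
  gcongr
  exact intervalIntegral.norm_integral_le_integral_norm (by positivity)

/-- The angles range over `(-π, π)`, the angular part of `Complex.polarCoord.target`. -/
theorem DiffContOnCl.ofReal_two_pi_mul_norm_le_lintegral {f : ℂ → E} {c : ℂ} {R : ℝ}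
    (hR : 0 < R) (hf : DiffContOnCl ℂ f (ball c R)) :
    ENNReal.ofReal (2 * π * ‖f c‖) ≤ ∫⁻ θ in Ioo (-π) π, ENNReal.ofReal ‖f (circleMap c R θ)‖ := by
  have hcont : Continuous fun θ => ‖f (circleMap c R θ)‖ := by
    refine (hf.continuousOn.comp_continuous (continuous_circleMap c R) fun θ => ?_).norm
    rw [closure_ball c hR.ne']
    exact sphere_subset_closedBall (circleMap_mem_sphere c hR.le θ)
  have hper : Function.Periodic (fun θ => ‖f (circleMap c R θ)‖) (2 * π) := fun θ => by
    simp [periodic_circleMap c R θ]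
  have havg := (abs_of_pos hR ▸ hf).norm_le_circleAverage_norm
  rw [← ofReal_integral_eq_lintegral_ofReal (hcont.integrableOn_Icc.mono_set Ioo_subset_Icc_self)
    (Eventually.of_forall fun θ => norm_nonneg _), ← integral_Ioc_eq_integral_Ioo,
    ← intervalIntegral.integral_of_le (by linarith [pi_pos])]
  have := hper.intervalIntegral_add_eq (-π) 0
  rw [show -π + 2 * π = π by ring, zero_add] at this
  rw [this]
  gcongr
  rw [circleAverage_def, smul_eq_mul] at havg
  simpa only [mul_inv_cancel_left₀ two_pi_pos.ne'] using
    mul_le_mul_of_nonneg_left havg two_pi_pos.le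

theorem DifferentiableOn.ofReal_pi_mul_sq_mul_norm_le_lintegral {f : ℂ → E} {a : ℂ} {r : ℝ}
    (hr : 0 ≤ r) (hf : DifferentiableOn ℂ f (ball a r)) :
    ENNReal.ofReal (π * r ^ 2 * ‖f a‖) ≤ ∫⁻ z in ball a r, ENNReal.ofReal ‖f z‖ := by
  set F : ℂ → ℝ≥0∞ := fun z => ENNReal.ofReal ‖f z‖
  set H : ℝ × ℝ → ℝ≥0∞ := fun q => ENNReal.ofReal q.1 * F (circleMap a q.1 q.2)
  have hH : AEMeasurable H ((volume.restrict (Ioo 0 r)).prod (volume.restrict (Ioo (-π) π))) := by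
    rw [Measure.prod_restrict, ← Measure.volume_eq_prod]
    refine (ENNReal.measurable_ofReal.comp measurable_fst).aemeasurable.mul
      (ContinuousOn.aemeasurable ?_ (measurableSet_Ioo.prod measurableSet_Ioo))
    refine ENNReal.continuous_ofReal.comp_continuousOn
      (hf.continuousOn.comp circleMap.continuous.continuousOn fun q hq => ?_).norm
    exact circleMap_mem_ball_s6 a hq.1 q.2
  have hpolar : ∫⁻ q in Ioo 0 r ×ˢ Ioo (-π) π, H q ≤ ∫⁻ z in ball a r, F z := calc
    ∫⁻ q in Ioo 0 r ×ˢ Ioo (-π) π, H q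
        = ∫⁻ q in Ioo 0 r ×ˢ Ioo (-π) π,
            ENNReal.ofReal q.1 • (ball a r).indicator F (a + Complex.polarCoord.symm q) := by
      refine setLIntegral_congr_fun (measurableSet_Ioo.prod measurableSet_Ioo) fun q hq => ?_
      rw [add_polarCoord_symm_eq_circleMap, indicator_of_mem (circleMap_mem_ball_s6 a hq.1 q.2),
        smul_eq_mul]
    _ ≤ ∫⁻ q in Complex.polarCoord.target,
            ENNReal.ofReal q.1 • (ball a r).indicator F (a + Complex.polarCoord.symm q) := by
      rw [Complex.polarCoord_target]
      exact lintegral_mono_set (prod_mono Ioo_subset_Ioi_self subset_rfl)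
    _ = ∫⁻ z, (ball a r).indicator F (a + z) :=
      Complex.lintegral_comp_polarCoord_symm fun z => (ball a r).indicator F (a + z)
    _ = ∫⁻ z in ball a r, F z := by
      rw [lintegral_add_left_eq_self, lintegral_indicator measurableSet_ball]
  calc ENNReal.ofReal (π * r ^ 2 * ‖f a‖)
      = ∫⁻ s in Ioo 0 r, ENNReal.ofReal s * ENNReal.ofReal (2 * π * ‖f a‖) := by
        have hid : ∫⁻ s in Ioo 0 r, ENNReal.ofReal s = ENNReal.ofReal (r ^ 2 / 2) := by
          rw [← ofReal_integral_eq_lintegral_ofReal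
            ((continuous_id' (X := ℝ)).integrableOn_Icc.mono_set Ioo_subset_Icc_self)
            ((ae_restrict_mem measurableSet_Ioo).mono fun s (hs : s ∈ Ioo 0 r) => hs.1.le),
            ← integral_Ioc_eq_integral_Ioo, ← intervalIntegral.integral_of_le hr, integral_id]
          ring_nf
        rw [lintegral_mul_const' _ _ ENNReal.ofReal_ne_top, hid, ← ENNReal.ofReal_mul (by positivity)]
        ring_nf
    _ ≤ ∫⁻ s in Ioo 0 r, ∫⁻ θ in Ioo (-π) π, H (s, θ) := by
        refine setLIntegral_mono' measurableSet_Ioo fun s hs => ?_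
        rw [lintegral_const_mul' _ _ ENNReal.ofReal_ne_top]
        gcongr
        exact DiffContOnCl.ofReal_two_pi_mul_norm_le_lintegral hs.1
          (hf.diffContOnCl_ball (closedBall_subset_ball hs.2))
    _ = ∫⁻ q in Ioo 0 r ×ˢ Ioo (-π) π, H q := by
        rw [Measure.volume_eq_prod, ← Measure.prod_restrict, lintegral_prod _ hH]
    _ ≤ _ := hpolar

end MeanValue

theorem lintegral_ofReal_le_of_meas_lt_le_rpow {α : Type*} [MeasurableSpace α] {μ : Measure α}
    {g : α → ℝ} {p M K T : ℝ} (hg : 0 ≤ᵐ[μ] g) (hgm : AEMeasurable g μ) (hp : 1 < p)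
    (hM : 0 ≤ M) (hK : 0 ≤ K) (hT : 0 < T) (hμ : μ univ ≤ ENNReal.ofReal M)
    (hdist : ∀ t > 0, μ {x | t < g x} ≤ ENNReal.ofReal (K * t ^ (-p))) :
    ∫⁻ x, ENNReal.ofReal (g x) ∂μ ≤ ENNReal.ofReal (M * T + K * T ^ (1 - p) / (p - 1)) := by
  have hsmall : ∫⁻ t in Ioc 0 T, μ {x | t < g x} ≤ ENNReal.ofReal (M * T) := calc
    ∫⁻ t in Ioc 0 T, μ {x | t < g x} ≤ ∫⁻ _ in Ioc 0 T, ENNReal.ofReal M :=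
        lintegral_mono fun t => (measure_mono (subset_univ _)).trans hμ
    _ = ENNReal.ofReal (M * T) := by
        rw [setLIntegral_const, Real.volume_Ioc, sub_zero, ENNReal.ofReal_mul hM]
  have hlarge : ∫⁻ t in Ioi T, μ {x | t < g x} ≤ ENNReal.ofReal (K * T ^ (1 - p) / (p - 1)) := calc
    ∫⁻ t in Ioi T, μ {x | t < g x} ≤ ∫⁻ t in Ioi T, ENNReal.ofReal (K * t ^ (-p)) :=
        setLIntegral_mono' measurableSet_Ioi fun t ht => hdist t (hT.trans ht)
    _ = ENNReal.ofReal (∫ t in Ioi T, K * t ^ (-p)) := by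
        refine (ofReal_integral_eq_lintegral_ofReal
          ((integrableOn_Ioi_rpow_of_lt (by linarith) hT).const_mul K) ?_).symm
        filter_upwards [ae_restrict_mem measurableSet_Ioi] with t ht
        exact mul_nonneg hK (rpow_nonneg (hT.trans ht).le _)
    _ = ENNReal.ofReal (K * T ^ (1 - p) / (p - 1)) := by
        rw [integral_const_mul, integral_Ioi_rpow_of_lt (by linarith) hT,
          show -p + 1 = 1 - p by ring, neg_div, ← div_neg, neg_sub, mul_div_assoc]
  rw [lintegral_eq_lintegral_meas_lt μ hg hgm, ← Ioc_union_Ioi_eq_Ioi hT.le,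
    lintegral_union measurableSet_Ioi (Ioc_disjoint_Ioi le_rfl),
    ENNReal.ofReal_add (by positivity) (by positivity)]
  exact add_le_add hsmall hlarge

theorem min_one_rpow_mul_rpow_le {r x k : ℝ} (hr : 0 < r) (hrx : r ≤ x) (hxk : x ≤ k * r)
    (q : ℝ) : min 1 (k ^ q) * r ^ q ≤ x ^ q := by
  rcases le_or_gt 0 q with hq | hq
  · calc min 1 (k ^ q) * r ^ q ≤ 1 * r ^ q := by gcongr; exact min_le_left _ _
      _ ≤ x ^ q := by rw [one_mul]; exact rpow_le_rpow hr.le hrx hq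
  · have hk : 0 ≤ k := nonneg_of_mul_nonneg_left (hr.le.trans (hrx.trans hxk)) hr
    calc min 1 (k ^ q) * r ^ q ≤ k ^ q * r ^ q := by gcongr; exact min_le_right _ _
      _ = (k * r) ^ q := (mul_rpow hk hr.le).symm
      _ ≤ x ^ q := rpow_le_rpow_of_nonpos (hr.trans_le hrx) hxk hq.le

theorem one_sub_norm_mem_Ioo_of_mem_ball {F : Type*} [SeminormedAddCommGroup F] {a z : F}
    (hz : z ∈ ball a ((1 - ‖a‖) / 2)) :
    1 - ‖z‖ ∈ Ioo ((1 - ‖a‖) / 2) (3 * ((1 - ‖a‖) / 2)) := by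
  have h₁ := norm_le_norm_add_norm_sub' z a
  have h₂ := norm_le_norm_add_norm_sub z a
  have := mem_ball_iff_norm.mp hz
  constructor <;> linarith

theorem ofReal_mul_volume_le_muP {p : ℝ} {a : ℂ} (ha : ‖a‖ < 1) {S : Set ℂ}
    (hS : S ⊆ ball a ((1 - ‖a‖) / 2)) :
    ENNReal.ofReal (min 1 (3 ^ (p - 2)) * ((1 - ‖a‖) / 2) ^ (p - 2)) * volume S ≤ muP p S := by
  have hr : 0 < (1 - ‖a‖) / 2 := half_pos (sub_pos.2 ha)
  have hdisc : S ⊆ ball 0 1 := fun z hz => by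
    have := (one_sub_norm_mem_Ioo_of_mem_ball (hS hz)).1
    rw [mem_ball_zero_iff]
    linarith
  rw [muP, withDensity_apply' _ S, Measure.restrict_restrict' measurableSet_ball,
    inter_eq_left.mpr hdisc, ← setLIntegral_const]
  refine setLIntegral_mono (by fun_prop) fun z hz => ENNReal.ofReal_le_ofReal ?_
  have hz := one_sub_norm_mem_Ioo_of_mem_ball (hS hz)
  exact min_one_rpow_mul_rpow_le hr hz.1.le hz.2.le _

theorem volume_inter_ball_le_of_muP_le {p Cw t : ℝ} {a : ℂ} (ha : ‖a‖ < 1) (ht : 0 < t)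
    {S : Set ℂ} (hS : ENNReal.ofReal (t ^ p) * muP p S ≤ ENNReal.ofReal Cw) :
    volume (S ∩ ball a ((1 - ‖a‖) / 2)) ≤
      ENNReal.ofReal (Cw / (min 1 (3 ^ (p - 2)) * ((1 - ‖a‖) / 2) ^ (p - 2)) * t ^ (-p)) := by
  set w := min 1 (3 ^ (p - 2)) * ((1 - ‖a‖) / 2) ^ (p - 2)
  have hw : 0 < w := by
    have : 0 < (1 - ‖a‖) / 2 := by linarith
    positivity
  have htp : 0 < t ^ p := rpow_pos_of_pos ht p
  have hmu : ENNReal.ofReal (t ^ p * w) * volume (S ∩ ball a ((1 - ‖a‖) / 2)) ≤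
      ENNReal.ofReal Cw := calc
    _ = ENNReal.ofReal (t ^ p) * (ENNReal.ofReal w * volume (S ∩ ball a ((1 - ‖a‖) / 2))) := by
        rw [ENNReal.ofReal_mul htp.le, mul_assoc]
    _ ≤ ENNReal.ofReal (t ^ p) * muP p S := by
        gcongr
        exact (ofReal_mul_volume_le_muP ha inter_subset_right).trans
          (measure_mono inter_subset_left)
    _ ≤ _ := hS
  rw [mul_comm, ← ENNReal.le_div_iff_mul_le (by simp [htp, hw]) (by simp),
    ← ENNReal.ofReal_div_of_pos (by positivity)] at hmu
  rwa [rpow_neg ht.le, div_mul_eq_mul_div, ← div_eq_mul_inv, div_div]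

theorem one_sub_norm_mul_norm_le_of_muP_le {p Cw : ℝ} {f : ℂ → ℂ} {a : ℂ} (hp : 1 < p)
    (hf : DifferentiableOn ℂ f (ball 0 1)) (hCw : 0 ≤ Cw)
    (hw : ∀ t > (0:ℝ), ENNReal.ofReal (t ^ p) * muP p {z | t < ‖f z‖} ≤ ENNReal.ofReal Cw)
    (ha : ‖a‖ < 1) :
    (1 - ‖a‖) * ‖f a‖ ≤ 2 * (π + Cw / (min 1 (3 ^ (p - 2)) * (p - 1))) / π := by
  set r := (1 - ‖a‖) / 2 with hr_def
  set c := min 1 ((3 : ℝ) ^ (p - 2))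
  have hr : 0 < r := half_pos (sub_pos.2 ha)
  have hc : 0 < c := lt_min one_pos (by positivity)
  have hball : ball a r ⊆ ball 0 1 := ball_subset_ball' (by rw [dist_zero_right, hr_def]; linarith)
  have hmean := (hf.mono hball).ofReal_pi_mul_sq_mul_norm_le_lintegral hr.le
  have hlayer := lintegral_ofReal_le_of_meas_lt_le_rpow (μ := volume.restrict (ball a r))
    (g := fun z => ‖f z‖) (M := π * r ^ 2) (K := Cw / (c * r ^ (p - 2))) (T := r⁻¹)
    (ae_of_all _ fun z => norm_nonneg _)
    ((hf.continuousOn.mono hball).norm.aemeasurable measurableSet_ball) hp (by positivity)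
    (by positivity) (inv_pos.2 hr)
    (by rw [Measure.restrict_apply_univ, Complex.volume_ball, ← ENNReal.ofReal_pow hr.le,
      ← ENNReal.ofReal_coe_nnreal, NNReal.coe_real_pi, ← ENNReal.ofReal_mul (by positivity),
      mul_comm])
    fun t ht => by
      rw [Measure.restrict_apply' measurableSet_ball]
      exact volume_inter_ball_le_of_muP_le ha ht (hw t ht)
  have hbound : π * r ^ 2 * ‖f a‖ ≤ r * (π + Cw / (c * (p - 1))) := by
    refine ((ENNReal.ofReal_le_ofReal_iff (by positivity)).1 (hmean.trans hlayer)).trans_eq ?_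
    rw [inv_rpow hr.le, ← rpow_neg hr.le, neg_sub, show p - 1 = p - 2 + 1 by ring,
      rpow_add_one hr.ne']
    field_simp
  have : π * (r * ‖f a‖) ≤ π + Cw / (c * (p - 1)) := by
    refine le_of_mul_le_mul_left ?_ hr
    nlinarith
  rw [le_div_iff₀ pi_pos, show 1 - ‖a‖ = 2 * r by rw [hr_def]; ring]
  linarith

theorem weak_Lp_subset_growth_space (p : ℝ) (hp : 1 < p) (f : ℂ → ℂ)
    (hf : DifferentiableOn ℂ f (Metric.ball 0 1))
    (hw : ∃ Cw : ℝ, ∀ lam > (0:ℝ),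
      ENNReal.ofReal (lam ^ p) * muP p {z | lam < ‖f z‖} ≤ ENNReal.ofReal Cw) :
    ∃ C > (0:ℝ), ∀ a ∈ Metric.ball (0:ℂ) 1, (1 - ‖a‖) * ‖f a‖ ≤ C := by
  obtain ⟨Cw, hCw⟩ := hw
  have hc : 0 < min 1 ((3 : ℝ) ^ (p - 2)) := lt_min one_pos (by positivity)
  refine ⟨2 * (π + max Cw 0 / (min 1 (3 ^ (p - 2)) * (p - 1))) / π, ?_, fun a ha => ?_⟩
  · have : 0 < p - 1 := by linarith
    positivity
  exact one_sub_norm_mul_norm_le_of_muP_le hp hf (le_max_right Cw 0)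
    (fun t ht => (hCw t ht).trans (ENNReal.ofReal_le_ofReal (le_max_left Cw 0)))
    (mem_ball_zero_iff.mp ha)
end
end

section
/- Let 1 < p < q < ∞. If f is holomorphic on the unit disc and f belongs to weak L^p(D, μ_p), then f belongs to weak L^q(D, μ_q). Quantitatively, for λ > 2 one has μ_q({z : |f(z)| > λ}) ≤ (2^q/(1−2^{−q})) · ||f||_{A^{−1}}^{q−p} · ||f||_{L^p_w(D,μ_p)}^p · λ^{−q}. -/
/-!
On the superlevel set `{|f| > λ}` the growth bound `(1 - |z|) |f z| ≤ ‖f‖_{A^{-1}}` forces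
`1 - |z| < ‖f‖_{A^{-1}} / λ`, so there the density of `μ_q` is at most
`(‖f‖_{A^{-1}} / λ)^{q-p}` times that of `μ_p`. Hence
`μ_q {|f| > λ} ≤ (‖f‖_{A^{-1}} / λ)^{q-p} μ_p {|f| > λ}`, and the weak `L^p` bound finishes the
estimate.
-/

open MeasureTheory Real Set Filter

noncomputable section

lemma withDensity_apply_le_const_mul {α : Type*} [MeasurableSpace α] {μ : Measure α}
    {g h : α → ENNReal} {c : ENNReal} {s : Set α} (hc : c ≠ ⊤) (hs : MeasurableSet s)
    (hgh : ∀ x ∈ s, g x ≤ c * h x) :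
    μ.withDensity g s ≤ c * μ.withDensity h s := by
  rw [withDensity_apply _ hs, withDensity_apply _ hs, ← lintegral_const_mul' _ _ hc]
  exact setLIntegral_mono' hs hgh

lemma muP_compl_ball (p : ℝ) : muP p (Metric.ball 0 1)ᶜ = 0 :=
  withDensity_absolutelyContinuous _ _ (by simp [Measure.restrict_apply measurableSet_ball.compl])

lemma muP_inter_ball (p : ℝ) (s : Set ℂ) : muP p (s ∩ Metric.ball 0 1) = muP p s :=
  measure_inter_conull (muP_compl_ball p)

lemma muP_le_rpow_mul_muP {p q t : ℝ} (hpq : p ≤ q) (ht : 0 ≤ t) {s : Set ℂ}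
    (hs : MeasurableSet (s ∩ Metric.ball 0 1))
    (hst : ∀ z ∈ s ∩ Metric.ball 0 1, 1 - ‖z‖ ≤ t) :
    muP q s ≤ ENNReal.ofReal (t ^ (q - p)) * muP p s := by
  rw [← muP_inter_ball q, ← muP_inter_ball p]
  refine withDensity_apply_le_const_mul ENNReal.ofReal_ne_top hs fun z hz => ?_
  have hz_pos : 0 < 1 - ‖z‖ := sub_pos.2 (mem_ball_zero_iff.1 hz.2)
  rw [← ENNReal.ofReal_mul (rpow_nonneg ht _)]
  refine ENNReal.ofReal_le_ofReal ?_
  calc (1 - ‖z‖) ^ (q - 2) = (1 - ‖z‖) ^ (q - p) * (1 - ‖z‖) ^ (p - 2) := by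
        rw [← rpow_add hz_pos]; ring_nf
    _ ≤ t ^ (q - p) * (1 - ‖z‖) ^ (p - 2) := by
        gcongr
        exact hst z hz

lemma one_le_two_rpow_div_one_sub_two_rpow_neg {q : ℝ} (hq : 0 < q) :
    1 ≤ (2:ℝ) ^ q / (1 - (2:ℝ) ^ (-q)) := by
  have h_neg : (2:ℝ) ^ (-q) < 1 := rpow_lt_one_of_one_lt_of_neg one_lt_two (neg_neg_of_pos hq)
  rw [le_div_iff₀ (sub_pos.2 h_neg)]
  linarith [one_le_rpow one_le_two hq.le, rpow_nonneg zero_le_two (-q)]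

lemma ofReal_mul_ofReal_le_of_one_le {K x y : ℝ} (hK : 1 ≤ K) (hx : 0 ≤ x) :
    ENNReal.ofReal x * ENNReal.ofReal y ≤ ENNReal.ofReal (K * (x * y)) := by
  rw [ENNReal.ofReal_mul (zero_le_one.trans hK), ENNReal.ofReal_mul hx]
  exact le_mul_of_one_le_left' (ENNReal.one_le_ofReal.2 hK)

theorem weak_Lp_nested_general (p q : ℝ) (hp : 1 < p) (hpq : p < q) (f : ℂ → ℂ) (CA Cw : ℝ)
    (hf : DifferentiableOn ℂ f (Metric.ball 0 1))
    (hA : ∀ z ∈ Metric.ball (0:ℂ) 1, (1 - ‖z‖) * ‖f z‖ ≤ CA)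
    (hw : ∀ lam > (0:ℝ), muP p {z | lam < ‖f z‖} ≤ ENNReal.ofReal (Cw ^ p / lam ^ p)) :
    ∀ lam > (2:ℝ), muP q {z | lam < ‖f z‖} ≤
      ENNReal.ofReal (((2:ℝ) ^ q / (1 - (2:ℝ) ^ (-q))) * CA ^ (q - p) * Cw ^ p / lam ^ q) := by
  intro lam hlam
  have hlam_pos : 0 < lam := by linarith
  have hCA : 0 ≤ CA := by
    exact (norm_nonneg (f 0)).trans (by simpa using hA 0 (Metric.mem_ball_self one_pos))
  set E : Set ℂ := {z | lam < ‖f z‖}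
  set K : ℝ := (2:ℝ) ^ q / (1 - (2:ℝ) ^ (-q))
  have h_meas : MeasurableSet (E ∩ Metric.ball 0 1) := by
    rw [inter_comm]
    exact (hf.continuousOn.norm.isOpen_inter_preimage Metric.isOpen_ball isOpen_Ioi).measurableSet
  have h_near_boundary : ∀ z ∈ E ∩ Metric.ball 0 1, 1 - ‖z‖ ≤ CA / lam := by
    rintro z ⟨hfz, hz⟩
    have hz_pos : 0 < 1 - ‖z‖ := sub_pos.2 (mem_ball_zero_iff.1 hz)
    rw [le_div_iff₀ hlam_pos]
    nlinarith [hA z hz, show lam < ‖f z‖ from hfz]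
  calc muP q E
      ≤ ENNReal.ofReal ((CA / lam) ^ (q - p)) * muP p E :=
        muP_le_rpow_mul_muP hpq.le (by positivity) h_meas h_near_boundary
    _ ≤ ENNReal.ofReal ((CA / lam) ^ (q - p)) * ENNReal.ofReal (Cw ^ p / lam ^ p) := by
        gcongr; exact hw lam hlam_pos
    _ ≤ ENNReal.ofReal (K * ((CA / lam) ^ (q - p) * (Cw ^ p / lam ^ p))) :=
        ofReal_mul_ofReal_le_of_one_le
          (one_le_two_rpow_div_one_sub_two_rpow_neg (by linarith)) (by positivity)
    _ = ENNReal.ofReal (K * CA ^ (q - p) * Cw ^ p / lam ^ q) := by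
        rw [div_rpow hCA hlam_pos.le, div_mul_div_comm, ← rpow_add hlam_pos]
        ring_nf

theorem weak_Lp_nested (p q : ℝ) (hp : 1 < p) (hpq : p < q) (f : ℂ → ℂ) (CA Cw : ℝ)
    (hf : DifferentiableOn ℂ f (Metric.ball 0 1)) (hCA : 0 ≤ CA) (hCw : 0 ≤ Cw)
    (hA : ∀ z ∈ Metric.ball (0:ℂ) 1, (1 - ‖z‖) * ‖f z‖ ≤ CA)
    (hw : ∀ lam > (0:ℝ), muP p {z | lam < ‖f z‖} ≤ ENNReal.ofReal (Cw ^ p / lam ^ p)) :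
    ∀ lam > (2:ℝ), muP q {z | lam < ‖f z‖} ≤
      ENNReal.ofReal (((2:ℝ) ^ q / (1 - (2:ℝ) ^ (-q))) * CA ^ (q - p) * Cw ^ p / lam ^ q) :=
  weak_Lp_nested_general p q hp hpq f CA Cw hf hA hw
end
end

section
/- Kolmogorov condition: Let (X, μ) be a measure space, 0 < r < p < ∞, and f a measurable function. Then f belongs to weak L^p(X, μ) if and only if there exists a constant C > 0 such that (∫_E |f|^r dμ)^{1/r} ≤ C · μ(E)^{1/r − 1/p} for every measurable set E ⊆ X of finite measure. -/
open MeasureTheory Real Set Filter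

noncomputable section

/-!
Weak type to the Kolmogorov condition: by the layer-cake formula,
`∫_E |f|^r = ∫_0^∞ μ(E ∩ {|f|^r > t}) dt`, and the integrand is at most
`min (μ E, C^p t^(-p/r))`; splitting the integral where the two bounds agree gives
`∫_E |f|^r ≤ p/(p-r) · C^r · μ(E)^(1-r/p)`.

Conversely, a set `E ⊆ {|f| > λ}` of finite measure satisfies
`λ^r μ(E) ≤ ∫_E |f|^r ≤ C^r μ(E)^(1-r/p)`, that is `μ(E) ≤ (C/λ)^p`, and by σ-finiteness
such sets exhaust the measure of `{|f| > λ}`.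
-/

theorem ofReal_mul_rpow_one_div_le_iff {m : ENNReal} {lam C p : ℝ} (hlam : 0 < lam) (hC : 0 ≤ C)
    (hp : 0 < p) :
    ENNReal.ofReal lam * m ^ (1 / p) ≤ ENNReal.ofReal C ↔ m ≤ ENNReal.ofReal ((C / lam) ^ p) := by
  rw [← ENNReal.ofReal_rpow_of_nonneg (div_nonneg hC hlam.le) hp.le,
    ENNReal.ofReal_div_of_pos hlam, ← ENNReal.rpow_inv_le_iff hp, one_div, mul_comm,
    ENNReal.le_div_iff_mul_le (Or.inl (ENNReal.ofReal_pos.2 hlam).ne')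
      (Or.inl ENNReal.ofReal_ne_top)]

section

variable {X : Type*} [MeasurableSpace X]

theorem lintegral_ofReal_le_add_of_meas_lt_le {ν : Measure X} {g : X → ℝ} (hg0 : 0 ≤ᵐ[ν] g)
    (hg : AEMeasurable g ν) {q a K s : ℝ} (hq : 1 < q) (ha : 0 ≤ a) (hK : 0 ≤ K) (hs : 0 < s)
    (h_univ : ν univ ≤ ENNReal.ofReal a)
    (h_tail : ∀ t, 0 < t → ν {x | t < g x} ≤ ENNReal.ofReal (K * t ^ (-q))) :
    ∫⁻ x, ENNReal.ofReal (g x) ∂ν ≤ ENNReal.ofReal (a * s + K * s ^ (1 - q) / (q - 1)) := by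
  have h_int : IntegrableOn (fun t : ℝ => K * t ^ (-q)) (Ioi s) :=
    ((integrableOn_Ioi_rpow_iff hs).2 (by linarith)).const_mul K
  have h_head : ∫⁻ t in Ioc 0 s, ν {x | t < g x} ≤ ENNReal.ofReal (a * s) :=
    calc ∫⁻ t in Ioc 0 s, ν {x | t < g x} ≤ ∫⁻ _ in Ioc 0 s, ENNReal.ofReal a :=
          setLIntegral_mono' measurableSet_Ioc fun _ _ =>
            (measure_mono (subset_univ _)).trans h_univ
      _ = ENNReal.ofReal (a * s) := by
          rw [setLIntegral_const, Real.volume_Ioc, sub_zero, ENNReal.ofReal_mul ha]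
  have h_rest : ∫⁻ t in Ioi s, ν {x | t < g x} ≤ ENNReal.ofReal (K * s ^ (1 - q) / (q - 1)) :=
    calc ∫⁻ t in Ioi s, ν {x | t < g x} ≤ ∫⁻ t in Ioi s, ENNReal.ofReal (K * t ^ (-q)) :=
          setLIntegral_mono' measurableSet_Ioi fun t ht => h_tail t (hs.trans ht)
      _ = ENNReal.ofReal (∫ t in Ioi s, K * t ^ (-q)) :=
          (ofReal_integral_eq_lintegral_ofReal h_int ((ae_restrict_iff' measurableSet_Ioi).2
            (ae_of_all _ fun t ht => by have := hs.trans ht; positivity))).symm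
      _ = ENNReal.ofReal (K * s ^ (1 - q) / (q - 1)) := by
          rw [integral_const_mul, integral_Ioi_rpow_of_lt (by linarith) hs,
            show -q + 1 = 1 - q by ring, neg_div, ← div_neg, neg_sub, mul_div_assoc]
  calc ∫⁻ x, ENNReal.ofReal (g x) ∂ν = ∫⁻ t in Ioi 0, ν {x | t < g x} :=
        lintegral_eq_lintegral_meas_lt ν hg0 hg
    _ = (∫⁻ t in Ioc 0 s, ν {x | t < g x}) + ∫⁻ t in Ioi s, ν {x | t < g x} := by
        rw [← Ioc_union_Ioi_eq_Ioi hs.le, lintegral_union measurableSet_Ioi Ioc_disjoint_Ioi_same]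
    _ ≤ _ := by
        rw [ENNReal.ofReal_add (by positivity) (by have := hq; positivity)]
        exact add_le_add h_head h_rest

theorem lintegral_ofReal_le_of_meas_lt_le {ν : Measure X} {g : X → ℝ} (hg0 : 0 ≤ᵐ[ν] g)
    (hg : AEMeasurable g ν) {q a K : ℝ} (hq : 1 < q) (ha : 0 < a) (hK : 0 < K)
    (h_univ : ν univ ≤ ENNReal.ofReal a)
    (h_tail : ∀ t, 0 < t → ν {x | t < g x} ≤ ENNReal.ofReal (K * t ^ (-q))) :
    ∫⁻ x, ENNReal.ofReal (g x) ∂ν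
      ≤ ENNReal.ofReal (q / (q - 1) * K ^ (1 / q) * a ^ (1 - 1 / q)) := by
  -- the split point `s` balances the two terms: `s ^ q = K / a`, so `K * s ^ (1 - q) = a * s`
  set s := (K / a) ^ (1 / q) with hs_def
  have hs : 0 < s := by positivity
  have hq0 : q ≠ 0 := by linarith
  have hsq : s ^ q = K / a := by
    rw [← Real.rpow_mul (by positivity), one_div_mul_cancel hq0, Real.rpow_one]
  have h_balance : K * s ^ (1 - q) = a * s := by
    rw [Real.rpow_sub hs, Real.rpow_one, hsq]
    field_simp
  have h_as : a * s = K ^ (1 / q) * a ^ (1 - 1 / q) := by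
    rw [hs_def, Real.div_rpow hK.le ha.le, Real.rpow_sub ha, Real.rpow_one]
    field_simp
  convert lintegral_ofReal_le_add_of_meas_lt_le hg0 hg hq ha.le hK.le hs h_univ h_tail using 2
  have hq1 : q - 1 ≠ 0 := by linarith
  rw [h_balance, h_as]
  field_simp
  ring

theorem setLIntegral_rpow_le_of_meas_lt_le {μ : Measure X} {g : X → ℝ} (hg0 : 0 ≤ g)
    (hg : AEMeasurable g μ) {r p C : ℝ} (hr : 0 < r) (hrp : r < p) (hC : 0 < C)
    (h : ∀ t, 0 < t → μ {x | t < g x} ≤ ENNReal.ofReal ((C / t) ^ p)) {E : Set X} (hE : μ E < ⊤) :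
    (∫⁻ x in E, ENNReal.ofReal (g x ^ r) ∂μ) ^ (1 / r)
      ≤ ENNReal.ofReal (C * (p / (p - r)) ^ (1 / r)) * μ E ^ (1 / r - 1 / p) := by
  rcases eq_or_ne (μ E) 0 with hE0 | hE0
  · rw [Measure.restrict_eq_zero.2 hE0, lintegral_zero_measure,
      ENNReal.zero_rpow_of_pos (one_div_pos.2 hr)]
    exact zero_le
  have hp : 0 < p := hr.trans hrp
  set a := (μ E).toReal
  have ha : 0 < a := ENNReal.toReal_pos hE0 hE.ne
  have h_tail : ∀ t, 0 < t → μ.restrict E {x | t < g x ^ r}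
      ≤ ENNReal.ofReal (C ^ p * t ^ (-(p / r))) := by
    intro t ht
    have h_set : {x | t < g x ^ r} = {x | t ^ r⁻¹ < g x} := by
      ext x
      exact (Real.rpow_inv_lt_iff_of_pos ht.le (hg0 x) hr).symm
    have h_pow : (C / t ^ r⁻¹) ^ p = C ^ p * t ^ (-(p / r)) := by
      rw [Real.div_rpow hC.le (by positivity), ← Real.rpow_mul ht.le, Real.rpow_neg ht.le,
        div_eq_mul_inv, inv_mul_eq_div]
    rw [h_set, ← h_pow]
    exact (Measure.restrict_apply_le E _).trans (h _ (by positivity))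
  have h_int := lintegral_ofReal_le_of_meas_lt_le (ν := μ.restrict E)
    (ae_of_all _ fun x => Real.rpow_nonneg (hg0 x) r) (hg.restrict.pow_const r)
    ((one_lt_div hr).2 hrp) ha (by positivity)
    (by rw [Measure.restrict_apply_univ, ENNReal.ofReal_toReal hE.ne]) h_tail
  have h_rhs : p / r / (p / r - 1) * (C ^ p) ^ (1 / (p / r)) * a ^ (1 - 1 / (p / r))
      = (C * (p / (p - r)) ^ (1 / r) * a ^ (1 / r - 1 / p)) ^ r := by
    have hpr : p - r ≠ 0 := by linarith
    rw [Real.mul_rpow (by positivity) (by positivity), Real.mul_rpow hC.le (by positivity),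
      ← Real.rpow_mul hC.le, ← Real.rpow_mul (by positivity), ← Real.rpow_mul ha.le,
      one_div_mul_cancel hr.ne', Real.rpow_one]
    field_simp
  calc (∫⁻ x in E, ENNReal.ofReal (g x ^ r) ∂μ) ^ (1 / r)
      ≤ ENNReal.ofReal ((C * (p / (p - r)) ^ (1 / r) * a ^ (1 / r - 1 / p)) ^ r) ^ (1 / r) := by
        rw [← h_rhs]
        exact ENNReal.rpow_le_rpow h_int (by positivity)
    _ = ENNReal.ofReal (C * (p / (p - r)) ^ (1 / r)) * μ E ^ (1 / r - 1 / p) := by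
        rw [ENNReal.ofReal_rpow_of_nonneg (by positivity) (by positivity),
          ← Real.rpow_mul (by positivity), mul_one_div_cancel hr.ne', Real.rpow_one,
          ENNReal.ofReal_mul (by positivity), ← ENNReal.ofReal_rpow_of_pos ha,
          ENNReal.ofReal_toReal hE.ne]

theorem ofReal_mul_measure_rpow_le_of_setLIntegral_rpow_le {μ : Measure X} {g : X → ℝ}
    {r p C lam : ℝ} (hr : 0 < r) (hrp : r < p) (hlam : 0 < lam) {E : Set X}
    (hEm : MeasurableSet E) (hE : μ E < ⊤) (hEg : E ⊆ {x | lam < g x})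
    (h : (∫⁻ x in E, ENNReal.ofReal (g x ^ r) ∂μ) ^ (1 / r)
      ≤ ENNReal.ofReal C * μ E ^ (1 / r - 1 / p)) :
    ENNReal.ofReal lam * μ E ^ (1 / p) ≤ ENNReal.ofReal C := by
  rcases eq_or_ne (μ E) 0 with hE0 | hE0
  · rw [hE0, ENNReal.zero_rpow_of_pos (one_div_pos.2 (hr.trans hrp)), mul_zero]
    exact zero_le
  have h_lower : ENNReal.ofReal (lam ^ r) * μ E ≤ ∫⁻ x in E, ENNReal.ofReal (g x ^ r) ∂μ :=
    calc ENNReal.ofReal (lam ^ r) * μ E = ∫⁻ _ in E, ENNReal.ofReal (lam ^ r) ∂μ :=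
          (setLIntegral_const _ _).symm
      _ ≤ _ := setLIntegral_mono' hEm fun x hx => ENNReal.ofReal_le_ofReal
          (Real.rpow_le_rpow hlam.le (hEg hx).le hr.le)
  have h_split : μ E ^ (1 / r) = μ E ^ (1 / p) * μ E ^ (1 / r - 1 / p) := by
    rw [← ENNReal.rpow_add _ _ hE0 hE.ne, add_sub_cancel]
  have h_mul : ENNReal.ofReal lam * μ E ^ (1 / p) * μ E ^ (1 / r - 1 / p)
      ≤ ENNReal.ofReal C * μ E ^ (1 / r - 1 / p) :=
    calc ENNReal.ofReal lam * μ E ^ (1 / p) * μ E ^ (1 / r - 1 / p)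
        = (ENNReal.ofReal (lam ^ r) * μ E) ^ (1 / r) := by
          rw [ENNReal.mul_rpow_of_nonneg _ _ (by positivity),
            ENNReal.ofReal_rpow_of_pos (by positivity), ← Real.rpow_mul hlam.le,
            mul_one_div_cancel hr.ne', Real.rpow_one, h_split, mul_assoc]
      _ ≤ _ := (ENNReal.rpow_le_rpow h_lower (by positivity)).trans h
  exact (ENNReal.mul_le_mul_iff_left (ENNReal.rpow_pos (pos_iff_ne_zero.2 hE0) hE.ne).ne'
    (ENNReal.rpow_ne_top_of_nonneg (by rw [sub_nonneg]; gcongr) hE.ne)).1 h_mul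

theorem meas_lt_le_of_setLIntegral_rpow_le {μ : Measure X} [SigmaFinite μ] {g : X → ℝ}
    (hg : Measurable g) {r p C : ℝ} (hr : 0 < r) (hrp : r < p) (hC : 0 ≤ C)
    (h : ∀ E : Set X, MeasurableSet E → μ E < ⊤ →
      (∫⁻ x in E, ENNReal.ofReal (g x ^ r) ∂μ) ^ (1 / r)
        ≤ ENNReal.ofReal C * μ E ^ (1 / r - 1 / p))
    {lam : ℝ} (hlam : 0 < lam) :
    μ {x | lam < g x} ≤ ENNReal.ofReal ((C / lam) ^ p) := by
  by_contra! h_big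
  obtain ⟨E, hEm, hEg, h_lt, hE⟩ :=
    Measure.exists_subset_measure_lt_top (measurableSet_lt measurable_const hg) h_big
  refine h_lt.not_ge ((ofReal_mul_rpow_one_div_le_iff hlam hC (hr.trans hrp)).1 ?_)
  exact ofReal_mul_measure_rpow_le_of_setLIntegral_rpow_le hr hrp hlam hEm hE hEg (h E hEm hE)

end

theorem kolmogorov_condition {X : Type*} [MeasurableSpace X] (μ : Measure X) [SigmaFinite μ]
    (r p : ℝ) (hr : 0 < r) (hrp : r < p) (f : X → ℂ) (hf : Measurable f) :
    (∃ C > (0:ℝ), ∀ lam : ℝ, 0 < lam →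
        ENNReal.ofReal lam * (μ {x | lam < ‖f x‖}) ^ (1/p) ≤ ENNReal.ofReal C) ↔
    (∃ C > (0:ℝ), ∀ E : Set X, MeasurableSet E → μ E < ⊤ →
        (∫⁻ x in E, ENNReal.ofReal (‖f x‖ ^ r) ∂μ) ^ (1/r)
          ≤ ENNReal.ofReal C * (μ E) ^ (1/r - 1/p)) := by
  have hp : 0 < p := hr.trans hrp
  constructor
  · rintro ⟨C, hC, h_weak⟩
    refine ⟨C * (p / (p - r)) ^ (1 / r), by have := sub_pos.2 hrp; positivity, fun E _ hE => ?_⟩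
    exact setLIntegral_rpow_le_of_meas_lt_le (fun x => norm_nonneg (f x)) hf.norm.aemeasurable
      hr hrp hC (fun t ht => (ofReal_mul_rpow_one_div_le_iff ht hC.le hp).1 (h_weak t ht)) hE
  · rintro ⟨C, hC, h_strong⟩
    exact ⟨C, hC, fun lam hlam => (ofReal_mul_rpow_one_div_le_iff hlam hC.le hp).2
      (meas_lt_le_of_setLIntegral_rpow_le hf.norm hr hrp hC.le h_strong hlam)⟩
end
end

section
/- Let {z_k} ⊂ D be a Blaschke sequence, Q ⊂ D a Carleson box of side length l(Q) ≤ 1/2, and set S = (1/l(Q)) Σ_{z_k ∈ Q} (1−|z_k|). If B is the Blaschke product with zeros {z_k}, z(Q) is the point with |z(Q)| = 1 − l(Q) whose argument is the center of the arc of Q, and m is defined by 1 − m = S^{−1/2}, then log(1/|B(z)|) ≥ S^{1/2}/144 for all z in the pseudo-hyperbolic disc Δ(z(Q), m). -/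
open MeasureTheory Real Set Filter

noncomputable section

/-- Inner function: bounded holomorphic on the unit disc with unimodular radial limits a.e. -/
def IsInner (B : ℂ → ℂ) : Prop :=
  DifferentiableOn ℂ B (Metric.ball 0 1) ∧ (∀ z ∈ Metric.ball (0:ℂ) 1, ‖B z‖ ≤ 1) ∧
  ∀ᵐ (θ : ℝ) ∂(volume.restrict (Set.Ico (0:ℝ) (2*π))),
    Filter.Tendsto (fun r : ℝ => ‖B ((r:ℂ) * Complex.exp ((θ:ℂ) * Complex.I))‖)
      (nhdsWithin 1 (Set.Iio 1)) (nhds 1)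

/-- Blaschke factor with zero `a` (the value `w` itself if `a = 0`); factors with `‖a‖ ≥ 1`
are interpreted as the constant `1`, so that finite products can be padded. -/
def bFactor (a w : ℂ) : ℂ :=
  if 1 ≤ ‖a‖ then 1
  else if a = 0 then w
  else ((‖a‖ : ℂ) / a) * ((a - w) / (1 - (starRingEnd ℂ) a * w))

/-- `B` is a (possibly finite) Blaschke product with zero sequence `z` (padded by points of
modulus `≥ 1`, which contribute trivial factors), up to a unimodular constant. -/
def IsBlaschkeProductWith (B : ℂ → ℂ) (ξ : ℂ) (z : ℕ → ℂ) : Prop :=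
  ‖ξ‖ = 1 ∧
  Summable (fun k => if ‖z k‖ < 1 then 1 - ‖z k‖ else 0) ∧
  ∀ w ∈ Metric.ball (0:ℂ) 1,
    Filter.Tendsto (fun n => ξ * ∏ k ∈ Finset.range n, bFactor (z k) w)
      Filter.atTop (nhds (B w))

/-- `B` is a Blaschke product. -/
def IsBlaschkeProduct (B : ℂ → ℂ) : Prop :=
  ∃ (ξ : ℂ) (z : ℕ → ℂ), IsBlaschkeProductWith B ξ z

/-- Uniform separation (the zeros of an interpolating Blaschke product). -/
def UniformlySeparated (z : ℕ → ℂ) : Prop :=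
  ∃ δ > (0:ℝ), ∀ k, ‖z k‖ < 1 →
    δ ≤ ∏' n : {n : ℕ // n ≠ k}, ‖(z k - z n) / (1 - (starRingEnd ℂ) (z n) * z k)‖

/-- `B` is an interpolating Blaschke product. -/
def IsInterpolatingBlaschkeProduct (B : ℂ → ℂ) : Prop :=
  ∃ (ξ : ℂ) (z : ℕ → ℂ), IsBlaschkeProductWith B ξ z ∧ UniformlySeparated z

/-- `B` is a finite product of interpolating Blaschke products. -/
def IsFiniteProdOfInterpolating (B : ℂ → ℂ) : Prop :=
  ∃ (N : ℕ) (Bs : Fin N → ℂ → ℂ), (∀ n, IsInterpolatingBlaschkeProduct (Bs n)) ∧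
    ∀ w ∈ Metric.ball (0:ℂ) 1, B w = ∏ n, Bs n w

/-- Pseudo-hyperbolic disc of radius `m` centered at `ζ`. -/
def pDisc (ζ : ℂ) (m : ℝ) : Set ℂ :=
  {z ∈ Metric.ball (0:ℂ) 1 | ‖z - ζ‖ < m * ‖1 - (starRingEnd ℂ) ζ * z‖}

/-- `B` is an exponential Blaschke product: a Blaschke product with at most `M` zeros in
each dyadic annulus `{2^{-j} < 1-|z| ≤ 2^{-j+1}}`. -/
def IsExponentialBlaschkeProduct (B : ℂ → ℂ) : Prop :=
  ∃ (ξ : ℂ) (z : ℕ → ℂ), IsBlaschkeProductWith B ξ z ∧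
    ∃ M : ℕ, ∀ j : ℕ,
      {k : ℕ | ‖z k‖ < 1 ∧ (2:ℝ) ^ (-(j:ℝ)) < 1 - ‖z k‖ ∧ 1 - ‖z k‖ ≤ (2:ℝ) ^ (-(j:ℝ) + 1)}.Finite ∧
      {k : ℕ | ‖z k‖ < 1 ∧ (2:ℝ) ^ (-(j:ℝ)) < 1 - ‖z k‖ ∧ 1 - ‖z k‖ ≤ (2:ℝ) ^ (-(j:ℝ) + 1)}.ncard ≤ M

/-!
For `w` in `Δ(ζ, m)`, `ζ = z(Q)`, the identity `|1 - ζ̄w|² - |ζ - w|² = (1 - |ζ|²)(1 - |w|²)` gives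
`(1 - m)|1 - ζ̄w|² ≤ (1 - |ζ|²)(1 - |w|²) ≤ 2l(1 - |w|²)`. Moreover `|1 - ζ̄w| ≥ 1 - |ζ| = l` and
every zero `z_k ∈ Q` lies within `2l` of `ζ`, so `|1 - z̄_k w| ≤ 3|1 - ζ̄w|`. Hence the Blaschke
factor `b_k` of such a zero satisfies `1 - |b_k(w)|² ≥ (1 - m)(1 - |z_k|)/(18l)`, and
`log (1/x) ≥ (1 - x²)/2` summed over the zeros in `Q` gives
`log (1/|B(w)|) ≥ (1 - m) l S / (36 l) = √S / 36`.
-/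

open ComplexConjugate Topology

lemma sq_norm_one_sub_conj_mul_sub_sq_norm_sub (a w : ℂ) :
    ‖1 - conj a * w‖ ^ 2 - ‖a - w‖ ^ 2 = (1 - ‖a‖ ^ 2) * (1 - ‖w‖ ^ 2) := by
  simp only [Complex.sq_norm, Complex.normSq_apply, Complex.sub_re, Complex.sub_im,
    Complex.mul_re, Complex.mul_im, Complex.one_re, Complex.one_im, Complex.conj_re,
    Complex.conj_im]
  ring

lemma one_sub_norm_le_norm_one_sub_conj_mul (a : ℂ) {w : ℂ} (hw : ‖w‖ ≤ 1) :
    1 - ‖a‖ ≤ ‖1 - conj a * w‖ :=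
  calc 1 - ‖a‖ ≤ 1 - ‖conj a * w‖ := by
        rw [norm_mul, RCLike.norm_conj]
        nlinarith [norm_nonneg a]
    _ ≤ ‖1 - conj a * w‖ := by simpa using norm_sub_norm_le (1 : ℂ) (conj a * w)

lemma norm_one_sub_conj_mul_le_add (a ζ : ℂ) {w : ℂ} (hw : ‖w‖ ≤ 1) :
    ‖1 - conj a * w‖ ≤ ‖1 - conj ζ * w‖ + ‖a - ζ‖ := by
  have h : 1 - conj a * w = (1 - conj ζ * w) - conj (a - ζ) * w := by rw [map_sub]; ring
  rw [h]
  refine (norm_sub_le _ _).trans (add_le_add_right ?_ _)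
  rw [norm_mul, RCLike.norm_conj]
  exact mul_le_of_le_one_right (norm_nonneg _) hw

lemma norm_bFactor {a : ℂ} (ha : ‖a‖ < 1) (w : ℂ) :
    ‖bFactor a w‖ = ‖a - w‖ / ‖1 - conj a * w‖ := by
  unfold bFactor
  rw [if_neg ha.not_ge]
  split_ifs with h0
  · simp [h0]
  · rw [norm_mul, norm_div, norm_div, Complex.norm_real, norm_norm,
      div_self (norm_ne_zero_iff.2 h0), one_mul]

lemma norm_bFactor_le_one (a : ℂ) {w : ℂ} (hw : ‖w‖ < 1) : ‖bFactor a w‖ ≤ 1 := by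
  by_cases ha : ‖a‖ < 1
  · have hD := (sub_pos.2 ha).trans_le (one_sub_norm_le_norm_one_sub_conj_mul a hw.le)
    rw [norm_bFactor ha, div_le_one hD,
      ← pow_le_pow_iff_left₀ (norm_nonneg _) hD.le two_ne_zero]
    have := sq_norm_one_sub_conj_mul_sub_sq_norm_sub a w
    have : 0 ≤ (1 - ‖a‖ ^ 2) * (1 - ‖w‖ ^ 2) :=
      mul_nonneg (by nlinarith [norm_nonneg a]) (by nlinarith [norm_nonneg w])
    linarith
  · simp [bFactor, not_lt.1 ha]

/-- The elementary inequality `log (1/x) ≥ (1 - x²)/2`, in exponential form. -/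
lemma le_exp_neg_half_of_sq_le {x c : ℝ} (h : x ^ 2 ≤ 1 - c) :
    x ≤ exp (-(c / 2)) := by
  have : x ≤ 1 - c / 2 := by nlinarith [sq_nonneg (x - 1)]
  linarith [add_one_le_exp (-(c / 2))]

lemma norm_bFactor_le_exp {a w : ℂ} (ha : ‖a‖ < 1) (hw : ‖w‖ < 1) {c : ℝ}
    (h : c * ‖1 - conj a * w‖ ^ 2 ≤ (1 - ‖a‖ ^ 2) * (1 - ‖w‖ ^ 2)) :
    ‖bFactor a w‖ ≤ exp (-(c / 2)) := by
  have hD := (sub_pos.2 ha).trans_le (one_sub_norm_le_norm_one_sub_conj_mul a hw.le)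
  refine le_exp_neg_half_of_sq_le ?_
  rw [norm_bFactor ha, div_pow, div_le_iff₀ (by positivity)]
  linarith [sq_norm_one_sub_conj_mul_sub_sq_norm_sub a w]

lemma mul_sq_norm_one_sub_conj_mul_le_of_mem_pDisc {ζ w : ℂ} {m : ℝ} (hζ : ‖ζ‖ < 1)
    (hw : w ∈ pDisc ζ m) :
    (1 - m) * ‖1 - conj ζ * w‖ ^ 2 ≤ (1 - ‖ζ‖ ^ 2) * (1 - ‖w‖ ^ 2) := by
  obtain ⟨hw1, hwζ⟩ := hw
  rw [Metric.mem_ball, dist_zero_right] at hw1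
  have hid := sq_norm_one_sub_conj_mul_sub_sq_norm_sub ζ w
  have hrhs : 0 ≤ (1 - ‖ζ‖ ^ 2) * (1 - ‖w‖ ^ 2) :=
    mul_nonneg (by nlinarith [norm_nonneg ζ]) (by nlinarith [norm_nonneg w])
  set D := ‖1 - conj ζ * w‖
  rcases le_or_gt m 1 with hm | hm
  · have hm0 : 0 ≤ m := by
      by_contra! h
      nlinarith [norm_nonneg (w - ζ), norm_nonneg (1 - conj ζ * w)]
    have : ‖ζ - w‖ ^ 2 ≤ (m * D) ^ 2 := by
      rw [norm_sub_rev]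
      exact pow_le_pow_left₀ (norm_nonneg _) hwζ.le 2
    nlinarith [sq_nonneg D]
  · nlinarith [sq_nonneg D]

lemma norm_bFactor_le_exp_of_mem_pDisc {a ζ w : ℂ} {l m : ℝ} (hl : 0 < l)
    (hζ : ‖ζ‖ = 1 - l) (hm : m ≤ 1) (hw : w ∈ pDisc ζ m) (ha : ‖a‖ < 1) (haζ : ‖a - ζ‖ ≤ 2 * l) :
    ‖bFactor a w‖ ≤ exp (-((1 - m) * (1 - ‖a‖) / (36 * l))) := by
  have hw1 : ‖w‖ < 1 := by simpa using hw.1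
  have hpd := mul_sq_norm_one_sub_conj_mul_le_of_mem_pDisc (hζ.trans_lt (by linarith)) hw
  set D := ‖1 - conj ζ * w‖
  have hlD : l ≤ D := by
    simpa [hζ] using one_sub_norm_le_norm_one_sub_conj_mul ζ hw1.le
  have hDa : ‖1 - conj a * w‖ ≤ 3 * D := by
    linarith [norm_one_sub_conj_mul_le_add a ζ hw1.le]
  have hζl : 1 - ‖ζ‖ ^ 2 ≤ 2 * l := by rw [hζ]; nlinarith
  have ha1 : 0 ≤ 1 - ‖a‖ := by linarith
  have hw2 : 0 ≤ 1 - ‖w‖ ^ 2 := by nlinarith [norm_nonneg w]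
  have key : (1 - m) * (1 - ‖a‖) * ‖1 - conj a * w‖ ^ 2
      ≤ (1 - ‖a‖ ^ 2) * (1 - ‖w‖ ^ 2) * (18 * l) :=
    calc (1 - m) * (1 - ‖a‖) * ‖1 - conj a * w‖ ^ 2
        ≤ (1 - m) * (1 - ‖a‖) * (3 * D) ^ 2 := by
          gcongr
      _ = 9 * (1 - ‖a‖) * ((1 - m) * D ^ 2) := by ring
      _ ≤ 9 * (1 - ‖a‖) * ((2 * l) * (1 - ‖w‖ ^ 2)) := by
          refine mul_le_mul_of_nonneg_left ?_ (by linarith)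
          exact hpd.trans (mul_le_mul_of_nonneg_right hζl hw2)
      _ ≤ (1 - ‖a‖ ^ 2) * (1 - ‖w‖ ^ 2) * (18 * l) := by
          have : 1 - ‖a‖ ≤ 1 - ‖a‖ ^ 2 := by nlinarith [norm_nonneg a]
          nlinarith [mul_nonneg hl.le hw2]
  convert norm_bFactor_le_exp ha hw1 (c := (1 - m) * (1 - ‖a‖) / (18 * l)) ?_ using 3
  · field_simp; ring
  · rw [div_mul_eq_mul_div, div_le_iff₀ (by positivity)]
    exact key

lemma norm_le_prod_norm_bFactor_of_tendsto {z : ℕ → ℂ} {w b : ℂ} (hw : ‖w‖ < 1)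
    (hb : Tendsto (fun n => ∏ k ∈ Finset.range n, bFactor (z k) w) atTop (𝓝 b))
    (F : Finset ℕ) : ‖b‖ ≤ ∏ k ∈ F, ‖bFactor (z k) w‖ := by
  refine le_of_tendsto hb.norm ?_
  filter_upwards [tendsto_finset_range.eventually_ge_atTop F] with n hn
  rw [norm_prod]
  exact Finset.prod_le_prod_of_subset_of_le_one hn (fun _ _ => norm_nonneg _)
    (fun _ _ _ => norm_bFactor_le_one _ hw)

lemma norm_le_exp_neg_tsum_of_tendsto {z : ℕ → ℂ} {w b : ℂ} (hw : ‖w‖ < 1)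
    (hb : Tendsto (fun n => ∏ k ∈ Finset.range n, bFactor (z k) w) atTop (𝓝 b))
    {p : ℕ → Prop} {c : ℕ → ℝ} (hc : Summable fun k : {k // p k} => c k)
    (hfac : ∀ k, p k → ‖bFactor (z k) w‖ ≤ exp (-c k)) :
    ‖b‖ ≤ exp (-∑' k : {k // p k}, c k) := by
  have hlim := ((continuous_exp.comp continuous_neg).tendsto _).comp hc.hasSum
  refine ge_of_tendsto hlim (Eventually.of_forall fun F => ?_)
  calc ‖b‖ ≤ ∏ k ∈ F.map (Function.Embedding.subtype p), ‖bFactor (z k) w‖ :=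
        norm_le_prod_norm_bFactor_of_tendsto hw hb _
    _ = ∏ k ∈ F, ‖bFactor (z k) w‖ := Finset.prod_map _ _ _
    _ ≤ ∏ k ∈ F, exp (-c k) :=
        Finset.prod_le_prod (fun _ _ => norm_nonneg _) (fun k _ => hfac k k.2)
    _ = exp (-∑ k ∈ F, c k) := by rw [← Finset.sum_neg_distrib, exp_sum]

lemma norm_ofReal_mul_exp_sub_ofReal_mul_exp_le (r s θ φ : ℝ) (hs : 0 ≤ s) :
    ‖(r:ℂ) * Complex.exp (θ * Complex.I) - s * Complex.exp (φ * Complex.I)‖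
      ≤ |r - s| + s * |θ - φ| := by
  have h : (r:ℂ) * Complex.exp (θ * Complex.I) - s * Complex.exp (φ * Complex.I)
      = ((r - s : ℝ) : ℂ) * Complex.exp (θ * Complex.I)
        + s * Complex.exp (φ * Complex.I) * (Complex.exp (Complex.I * (θ - φ : ℝ)) - 1) := by
    rw [mul_sub, mul_assoc, ← Complex.exp_add]
    push_cast
    ring_nf
  rw [h]
  refine (norm_add_le _ _).trans (add_le_add (le_of_eq ?_) ?_)
  · rw [norm_mul, Complex.norm_exp_ofReal_mul_I, mul_one, Complex.norm_real, Real.norm_eq_abs]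
  · rw [norm_mul, norm_mul, Complex.norm_exp_ofReal_mul_I, mul_one, Complex.norm_real,
      Real.norm_of_nonneg hs]
    exact mul_le_mul_of_nonneg_left (Real.norm_exp_I_mul_ofReal_sub_one_le.trans_eq
      (Real.norm_eq_abs _)) hs

/-- The Carleson box over the arc of length `l` centred at angle `θ0` (with `0` removed, where
the argument is undefined). -/
def carlesonBox (θ0 l : ℝ) : Set ℂ :=
  {w ∈ Metric.ball (0:ℂ) 1 | w ≠ 0 ∧
    (∃ θ : ℝ, |θ - θ0| ≤ l / 2 ∧ w / (‖w‖ : ℂ) = Complex.exp ((θ:ℂ) * Complex.I)) ∧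
    1 - ‖w‖ ≤ l}

/-- The point `z(Q)` of the Carleson box `Q = carlesonBox θ0 l`. -/
def carlesonCenter (θ0 l : ℝ) : ℂ :=
  ((1 - l : ℝ) : ℂ) * Complex.exp (θ0 * Complex.I)

lemma norm_carlesonCenter (θ0 : ℝ) {l : ℝ} (hl : l ≤ 1) : ‖carlesonCenter θ0 l‖ = 1 - l := by
  rw [carlesonCenter, norm_mul, Complex.norm_exp_ofReal_mul_I, mul_one, Complex.norm_real,
    Real.norm_of_nonneg (by linarith)]

lemma norm_sub_carlesonCenter_le {θ0 l : ℝ} (hl : l ≤ 1) {w : ℂ} (hw : w ∈ carlesonBox θ0 l) :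
    ‖w - carlesonCenter θ0 l‖ ≤ 2 * l := by
  obtain ⟨hw1, hw0, ⟨θ, hθ, hdir⟩, hwl⟩ := hw
  rw [Metric.mem_ball, dist_zero_right] at hw1
  rw [div_eq_iff (by exact_mod_cast norm_ne_zero_iff.2 hw0), mul_comm] at hdir
  rw [hdir]
  refine (norm_ofReal_mul_exp_sub_ofReal_mul_exp_le _ _ _ _ (by linarith)).trans ?_
  rw [abs_of_nonneg (by linarith)]
  nlinarith

theorem blaschke_small_on_pseudo_disc_of_heavy_carleson_box_general
    (z : ℕ → ℂ) (B : ℂ → ℂ) (θ0 l : ℝ) (hl0 : 0 < l) (hl : l ≤ 1/2)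
    (hsum : Summable fun k => 1 - ‖z k‖)
    (hB : ∀ w ∈ Metric.ball (0:ℂ) 1,
      Filter.Tendsto (fun n => ∏ k ∈ Finset.range n, bFactor (z k) w)
        Filter.atTop (nhds (B w)))
    (Q : Set ℂ)
    (hQ : Q = {w ∈ Metric.ball (0:ℂ) 1 | w ≠ 0 ∧
      (∃ θ : ℝ, |θ - θ0| ≤ l/2 ∧ w / (‖w‖ : ℂ) = Complex.exp ((θ:ℂ) * Complex.I)) ∧
      1 - ‖w‖ ≤ l})
    (S : ℝ) (hS : S = (1/l) * ∑' k : {k : ℕ // z k ∈ Q}, (1 - ‖z (k:ℕ)‖)) :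
    ∀ w ∈ pDisc (((1 - l : ℝ) : ℂ) * Complex.exp ((θ0:ℂ) * Complex.I)) (1 - 1/Real.sqrt S),
      ‖B w‖ ≤ Real.exp (-(Real.sqrt S / 144)) := by
  change Q = carlesonBox θ0 l at hQ
  subst hQ
  intro w hw
  change w ∈ pDisc (carlesonCenter θ0 l) _ at hw
  set u := √S
  have hm : 1 - 1 / u ≤ 1 := by linarith [one_div_nonneg.2 (sqrt_nonneg S)]
  have hT : ∑' k : {k // z k ∈ carlesonBox θ0 l}, (1 - ‖z k‖) = l * (u * u) := by
    have hS0 : 0 ≤ S := hS ▸ mul_nonneg (by positivity)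
      (tsum_nonneg fun k => sub_nonneg.2 (mem_ball_zero_iff.1 k.2.1).le)
    rw [mul_self_sqrt hS0, hS]
    field_simp
  have hw1 : ‖w‖ < 1 := by simpa using hw.1
  have hfac : ∀ k, z k ∈ carlesonBox θ0 l →
      ‖bFactor (z k) w‖ ≤ Real.exp (-(1 / u * (1 - ‖z k‖) / (36 * l))) := by
    intro k hk
    have := norm_bFactor_le_exp_of_mem_pDisc hl0 (norm_carlesonCenter θ0 (by linarith)) hm hw
      (by simpa using hk.1) (norm_sub_carlesonCenter_le (by linarith) hk)
    rwa [sub_sub_cancel] at this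
  have hbound := norm_le_exp_neg_tsum_of_tendsto hw1 (hB w hw.1)
    (((hsum.subtype _).mul_left (1 / u)).div_const (36 * l)) hfac
  -- no case split on `S = 0` is needed: there `1 / u = 0` and both sides vanish
  have hexponent : 1 / u * (l * (u * u)) / (36 * l) = u / 36 := by
    rw [show 1 / u * (l * (u * u)) = l * (u⁻¹ * u * u) by ring, inv_mul_mul_self]
    field_simp
  rw [tsum_div_const, tsum_mul_left, hT, hexponent] at hbound
  exact hbound.trans (exp_le_exp.2 (by linarith [sqrt_nonneg S]))

theorem blaschke_small_on_pseudo_disc_of_heavy_carleson_box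
    (z : ℕ → ℂ) (B : ℂ → ℂ) (θ0 l : ℝ) (hl0 : 0 < l) (hl : l ≤ 1/2)
    (hz : ∀ k, ‖z k‖ < 1) (hsum : Summable fun k => 1 - ‖z k‖)
    (hB : ∀ w ∈ Metric.ball (0:ℂ) 1,
      Filter.Tendsto (fun n => ∏ k ∈ Finset.range n, bFactor (z k) w)
        Filter.atTop (nhds (B w)))
    (Q : Set ℂ)
    (hQ : Q = {w ∈ Metric.ball (0:ℂ) 1 | w ≠ 0 ∧
      (∃ θ : ℝ, |θ - θ0| ≤ l/2 ∧ w / (‖w‖ : ℂ) = Complex.exp ((θ:ℂ) * Complex.I)) ∧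
      1 - ‖w‖ ≤ l})
    (hne : ∃ k, z k ∈ Q)
    (S : ℝ) (hS : S = (1/l) * ∑' k : {k : ℕ // z k ∈ Q}, (1 - ‖z (k:ℕ)‖)) :
    ∀ w ∈ pDisc (((1 - l : ℝ) : ℂ) * Complex.exp ((θ0:ℂ) * Complex.I)) (1 - 1/Real.sqrt S),
      ‖B w‖ ≤ Real.exp (-(Real.sqrt S / 144)) :=
  blaschke_small_on_pseudo_disc_of_heavy_carleson_box_general z B θ0 l hl0 hl hsum hB Q hQ S hS
end
end

section
/- Let B be a Blaschke product, ζ_k ∈ D a sequence, and η, δ* ∈ (0,1] constants such that (1−|z|²)|B′(z)| ≥ δ* for all z ∈ Δ(ζ_k, η) and all k, and such that the discs Δ(ζ_k, η) are quasi-disjoint: Σ_k χ_{Δ(ζ_k,η)}(z) ≤ M for all z ∈ D. If B′ ∈ weak L^p(D, μ_p) for some 1 < p < ∞, then there is a finite bound N such that each annulus A_j = {z : 2^{−j} < 1−|z| ≤ 2^{−j+1}} contains at most N points ζ_k. -/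
open MeasureTheory Real Set Filter

noncomputable section

open scoped ENNReal

/-! For `ζ_k ∈ A_j` we have `1 - ‖ζ_k‖ ≍ R = 2^{-j}`. The lower bound on `(1 - |w|²)|B'(w)|`
forces `|B'| > λ ≍ 1/R` on `Δ(ζ_k, η)`, while `Δ(ζ_k, η)` contains a Euclidean disc of radius
`≍ R` on which the density `(1 - |z|)^{p-2}` is `≍ R^{p-2}`, so `μ_p(Δ(ζ_k, η)) ≳ R^p`.
Since the discs overlap at most `M` times, `#{k : ζ_k ∈ A_j} · R^p ≲ M μ_p{|B'| > λ} ≲ M λ^{-p}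
≍ M R^p`, a bound independent of `j`. -/

section Packing

variable {α ι : Type*} [MeasurableSpace α] (μ : Measure α) {D : ι → Set α} {M : ℕ}

theorem sum_measure_le_mul_measure_biUnion (F : Finset ι) (hD : ∀ k ∈ F, MeasurableSet (D k))
    (hM : ∀ w, {k | w ∈ D k}.encard ≤ M) :
    ∑ k ∈ F, μ (D k) ≤ M * μ (⋃ k ∈ F, D k) := by
  classical
  set U := ⋃ k ∈ F, D k
  have hU : MeasurableSet U := F.measurableSet_biUnion hD
  have hpoint : ∀ w, ∑ k ∈ F, (D k).indicator 1 w ≤ (M : ℝ≥0∞) * U.indicator 1 w := by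
    intro w
    by_cases hw : w ∈ U
    · have hcard : ((F.filter (w ∈ D ·)).card : ℕ∞) ≤ M := by
        rw [← Set.encard_coe_eq_coe_finsetCard]
        exact (Set.encard_le_encard fun k hk => (Finset.mem_filter.1 hk).2).trans (hM w)
      simp only [Set.indicator_apply, Pi.one_apply, hw, if_true, mul_one, Finset.sum_boole]
      exact_mod_cast hcard
    · have hzero : ∀ k ∈ F, (D k).indicator (1 : α → ℝ≥0∞) w = 0 := fun k hk =>
        Set.indicator_of_notMem (fun hwk => hw (Set.mem_biUnion hk hwk)) _
      simp [Finset.sum_eq_zero hzero]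
  calc ∑ k ∈ F, μ (D k) = ∫⁻ w, ∑ k ∈ F, (D k).indicator 1 w ∂μ := by
        rw [lintegral_finsetSum _ fun k hk => measurable_one.indicator (hD k hk)]
        exact Finset.sum_congr rfl fun k hk => (lintegral_indicator_one (hD k hk)).symm
    _ ≤ ∫⁻ w, M * U.indicator 1 w ∂μ := lintegral_mono hpoint
    _ = M * μ U := by
        rw [lintegral_const_mul _ (measurable_one.indicator hU), lintegral_indicator_one hU]

theorem finite_and_ncard_mul_le_of_bounded_overlap {S : Set ι} {E : Set α} {m : ℝ≥0∞}
    (hD : ∀ k ∈ S, MeasurableSet (D k)) (hM : ∀ w, {k | w ∈ D k}.encard ≤ M)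
    (hm : ∀ k ∈ S, m ≤ μ (D k)) (hDE : ∀ k ∈ S, D k ⊆ E) (hm0 : m ≠ 0) (hE : μ E ≠ ∞) :
    S.Finite ∧ S.ncard * m ≤ M * μ E := by
  have hfinset : ∀ F : Finset ι, ↑F ⊆ S → F.card * m ≤ M * μ E := fun F hF =>
    calc F.card * m = ∑ _k ∈ F, m := by simp
      _ ≤ ∑ k ∈ F, μ (D k) := Finset.sum_le_sum fun k hk => hm k (hF hk)
      _ ≤ M * μ (⋃ k ∈ F, D k) :=
          sum_measure_le_mul_measure_biUnion μ F (fun k hk => hD k (hF hk)) hM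
      _ ≤ M * μ E := by
          gcongr
          exact Set.iUnion₂_subset fun k hk => hDE k (hF hk)
  have hS : S.Finite := by
    by_contra hinf
    obtain ⟨n, hn⟩ :=
      ENNReal.exists_nat_mul_gt hm0 (ENNReal.mul_ne_top (ENNReal.natCast_ne_top M) hE)
    obtain ⟨F, hFS, rfl⟩ := Set.Infinite.exists_subset_card_eq hinf n
    exact (hfinset F hFS).not_gt hn
  refine ⟨hS, ?_⟩
  simpa [Set.ncard_eq_toFinset_card S hS] using hfinset hS.toFinset (by simp)

end Packing

theorem isOpen_pDisc (ζ : ℂ) (η : ℝ) : IsOpen (pDisc ζ η) :=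
  Metric.isOpen_ball.inter <| isOpen_lt (continuous_id.sub continuous_const).norm
    (continuous_const.mul (continuous_const.sub (continuous_const.mul continuous_id)).norm)

theorem pDisc_mono {ζ : ℂ} {η₁ η₂ : ℝ} (h : η₁ ≤ η₂) : pDisc ζ η₁ ⊆ pDisc ζ η₂ :=
  fun _ ⟨hz, hlt⟩ => ⟨hz, hlt.trans_le (mul_le_mul_of_nonneg_right h (norm_nonneg _))⟩

theorem norm_one_sub_conj_mul_sq_sub_norm_sub_sq (a b : ℂ) :
    ‖1 - (starRingEnd ℂ) b * a‖ ^ 2 - ‖a - b‖ ^ 2 = (1 - ‖a‖ ^ 2) * (1 - ‖b‖ ^ 2) := by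
  simp only [Complex.sq_norm, Complex.normSq_apply, Complex.sub_re, Complex.sub_im,
    Complex.mul_re, Complex.mul_im, Complex.one_re, Complex.one_im, Complex.conj_re,
    Complex.conj_im]
  ring

theorem one_sub_norm_mul_norm_le_norm_one_sub_conj_mul (a b : ℂ) :
    1 - ‖a‖ * ‖b‖ ≤ ‖1 - (starRingEnd ℂ) a * b‖ := by
  simpa [norm_mul] using norm_sub_norm_le (1 : ℂ) ((starRingEnd ℂ) a * b)

theorem ball_subset_pDisc {ζ : ℂ} {η : ℝ} (hη0 : 0 ≤ η) (hη1 : η ≤ 1) :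
    Metric.ball ζ (η * (1 - ‖ζ‖) / 2) ⊆ pDisc ζ η := by
  intro z hz
  rw [Metric.mem_ball, dist_eq_norm] at hz
  have hζ : ‖ζ‖ < 1 := by nlinarith [norm_nonneg (z - ζ)]
  have hz1 : ‖z‖ < 1 := by nlinarith [norm_le_norm_add_norm_sub' z ζ]
  have hd : 1 - ‖ζ‖ ≤ ‖1 - (starRingEnd ℂ) ζ * z‖ := by
    nlinarith [one_sub_norm_mul_norm_le_norm_one_sub_conj_mul ζ z, norm_nonneg ζ]
  refine ⟨mem_ball_zero_iff.2 hz1, hz.trans_le ?_⟩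
  nlinarith [mul_le_mul_of_nonneg_left hd hη0]

theorem mul_one_sub_sq_lt_of_mem_pDisc {ζ w : ℂ} {η : ℝ} (hζ : ‖ζ‖ < 1)
    (hw : w ∈ pDisc ζ η) : (1 - η ^ 2) * (1 - ‖w‖ ^ 2) < 4 * (1 - ‖ζ‖ ^ 2) := by
  obtain ⟨hw1, hlt⟩ := hw
  rw [mem_ball_zero_iff] at hw1
  set d := ‖1 - (starRingEnd ℂ) ζ * w‖
  have hd : 1 - ‖w‖ ≤ d := by
    nlinarith [one_sub_norm_mul_norm_le_norm_one_sub_conj_mul ζ w, norm_nonneg w]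
  have hsq : ‖w - ζ‖ ^ 2 < η ^ 2 * d ^ 2 := by
    rw [← mul_pow]; exact pow_lt_pow_left₀ hlt (norm_nonneg _) two_ne_zero
  have hid := norm_one_sub_conj_mul_sq_sub_norm_sub_sq w ζ
  rcases le_or_gt (1 - η ^ 2) 0 with hη | hη
  · nlinarith [mul_nonpos_of_nonpos_of_nonneg hη (by nlinarith [norm_nonneg w] : 0 ≤ 1 - ‖w‖ ^ 2),
      norm_nonneg ζ]
  · -- `(1 - η²) d² < (1 - ‖w‖²)(1 - ‖ζ‖²)` by the identity, and `1 - ‖w‖² ≤ 2 d`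
    have hwd : 1 - ‖w‖ ^ 2 ≤ 2 * d := by nlinarith [norm_nonneg w]
    have hw0 : 0 < 1 - ‖w‖ ^ 2 := by nlinarith [norm_nonneg w]
    nlinarith [mul_le_mul hwd hwd hw0.le (by linarith)]

theorem pDisc_subset_setOf_lt_norm_deriv {B : ℂ → ℂ} {ζ : ℂ} {η δ R : ℝ} (hζ : ‖ζ‖ < 1)
    (hδ : 0 < δ) (hR : 1 - ‖ζ‖ ≤ 2 * R)
    (hlow : ∀ w ∈ pDisc ζ η, δ ≤ (1 - ‖w‖ ^ 2) * ‖deriv B w‖) :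
    pDisc ζ η ⊆ {w | δ * (1 - η ^ 2) / 16 / R < ‖deriv B w‖} := by
  intro w hw
  have hR0 : 0 < R := by linarith
  have hw1 : 0 ≤ 1 - ‖w‖ ^ 2 := by nlinarith [mem_ball_zero_iff.1 hw.1, norm_nonneg w]
  have hB' : 0 < ‖deriv B w‖ := pos_of_mul_pos_right (hδ.trans_le (hlow w hw)) hw1
  have hgeom : (1 - η ^ 2) * (1 - ‖w‖ ^ 2) < 16 * R :=
    (mul_one_sub_sq_lt_of_mem_pDisc hζ hw).trans_le (by nlinarith [norm_nonneg ζ])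
  change δ * (1 - η ^ 2) / 16 / R < ‖deriv B w‖
  rw [div_div, div_lt_iff₀ (by positivity)]
  rcases le_or_gt (1 - η ^ 2) 0 with hη | hη
  · nlinarith
  · calc δ * (1 - η ^ 2) ≤ (1 - ‖w‖ ^ 2) * ‖deriv B w‖ * (1 - η ^ 2) := by
          gcongr; exact hlow w hw
      _ = (1 - η ^ 2) * (1 - ‖w‖ ^ 2) * ‖deriv B w‖ := by ring
      _ < 16 * R * ‖deriv B w‖ := mul_lt_mul_of_pos_right hgeom hB'
      _ = ‖deriv B w‖ * (16 * R) := mul_comm _ _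

theorem rpow_neg_abs_mul_rpow_le_rpow {b c t : ℝ} (s : ℝ) (hb : 0 < b) (hc : 1 ≤ c)
    (hlo : b / c ≤ t) (hhi : t ≤ c * b) : c ^ (-|s|) * b ^ s ≤ t ^ s := by
  have ht : 0 < t := (div_pos hb (by linarith)).trans_le hlo
  have hratio : c ^ (-|s|) ≤ (t / b) ^ s := by
    rcases le_or_gt 0 s with hs | hs
    · rw [abs_of_nonneg hs, Real.rpow_neg (by linarith), ← Real.inv_rpow (by linarith)]
      refine Real.rpow_le_rpow (by positivity) ?_ hs
      rw [le_div_iff₀ hb, ← div_eq_inv_mul]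
      exact hlo
    · rw [abs_of_neg hs, neg_neg]
      exact Real.rpow_le_rpow_of_nonpos (div_pos ht hb) ((div_le_iff₀ hb).2 hhi) hs.le
  calc c ^ (-|s|) * b ^ s ≤ (t / b) ^ s * b ^ s := by gcongr
    _ = t ^ s := by rw [← Real.mul_rpow (by positivity) hb.le, div_mul_cancel₀ _ hb.ne']

theorem ofReal_mul_volume_le_muP_s16 {p m : ℝ} {s : Set ℂ} (hs : MeasurableSet s)
    (hs1 : s ⊆ Metric.ball 0 1) (hm : ∀ z ∈ s, m ≤ (1 - ‖z‖) ^ (p - 2)) :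
    ENNReal.ofReal m * volume s ≤ muP p s := by
  rw [muP, withDensity_apply _ hs, Measure.restrict_restrict hs, inter_eq_self_of_subset_left hs1,
    ← setLIntegral_const]
  exact setLIntegral_mono (by fun_prop) fun z hz => ENNReal.ofReal_le_ofReal (hm z hz)

theorem ofReal_mul_volume_ball_le_muP {ζ : ℂ} {p R r : ℝ} (hR : R < 1 - ‖ζ‖)
    (hR' : 1 - ‖ζ‖ ≤ 2 * R) (hr : r ≤ (1 - ‖ζ‖) / 2) :
    ENNReal.ofReal (4 ^ (-|p - 2|) * R ^ (p - 2)) * volume (Metric.ball ζ r)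
      ≤ muP p (Metric.ball ζ r) := by
  refine ofReal_mul_volume_le_muP_s16 measurableSet_ball (fun z hz => ?_) fun z hz => ?_
  -- `R / 2 < 1 - ‖z‖ ≤ 3R`, so `4 ^ (-|p - 2|)` absorbs the change of the density over the ball
  all_goals
    rw [Metric.mem_ball, dist_eq_norm] at hz
    have hlo := norm_sub_norm_le ζ z
    have hhi := norm_le_norm_add_norm_sub' z ζ
    rw [norm_sub_rev] at hlo
  · rw [mem_ball_zero_iff]; linarith
  · exact rpow_neg_abs_mul_rpow_le_rpow _ (by linarith) (by norm_num) (by linarith) (by linarith)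

theorem ofReal_le_muP_pDisc {ζ : ℂ} {η p R : ℝ} (hη0 : 0 ≤ η) (hη1 : η ≤ 1)
    (hR : R < 1 - ‖ζ‖) (hR' : 1 - ‖ζ‖ ≤ 2 * R) :
    ENNReal.ofReal (4 ^ (-|p - 2|) * π * η ^ 2 / 4 * R ^ p) ≤ muP p (pDisc ζ η) := by
  have hR0 : 0 < R := by linarith
  have hc : 0 ≤ 4 ^ (-|p - 2|) * R ^ (p - 2) := by
    have := Real.rpow_pos_of_pos hR0 (p - 2); positivity
  have hr : η * R / 2 ≤ η * (1 - ‖ζ‖) / 2 := by gcongr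
  have hr0 : 0 ≤ η * (1 - ‖ζ‖) / 2 := by nlinarith
  have hRp : R ^ p = R ^ (p - 2) * R ^ 2 := by
    rw [← Real.rpow_natCast R 2, ← Real.rpow_add hR0]; norm_num
  have hreal : 4 ^ (-|p - 2|) * π * η ^ 2 / 4 * R ^ p
      ≤ 4 ^ (-|p - 2|) * R ^ (p - 2) * ((η * (1 - ‖ζ‖) / 2) ^ 2 * π) := by
    rw [hRp]
    have : (η * R / 2) ^ 2 ≤ (η * (1 - ‖ζ‖) / 2) ^ 2 := by gcongr
    have := mul_le_mul_of_nonneg_left this (mul_nonneg hc Real.pi_pos.le)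
    nlinarith
  calc ENNReal.ofReal (4 ^ (-|p - 2|) * π * η ^ 2 / 4 * R ^ p)
      ≤ ENNReal.ofReal (4 ^ (-|p - 2|) * R ^ (p - 2))
          * volume (Metric.ball ζ (η * (1 - ‖ζ‖) / 2)) := by
        rw [Complex.volume_ball, ← NNReal.coe_real_pi, ← ENNReal.ofReal_coe_nnreal,
          ← ENNReal.ofReal_pow hr0, ← ENNReal.ofReal_mul (by positivity),
          ← ENNReal.ofReal_mul hc]
        exact ENNReal.ofReal_le_ofReal hreal
    _ ≤ muP p (Metric.ball ζ (η * (1 - ‖ζ‖) / 2)) :=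
        ofReal_mul_volume_ball_le_muP hR hR' (by nlinarith [norm_nonneg ζ])
    _ ≤ muP p (pDisc ζ η) := measure_mono (ball_subset_pDisc hη0 hη1)

theorem finite_and_ncard_le_of_forall_mem_annulus {B : ℂ → ℂ} {ζ : ℕ → ℂ} {η δ p Cw R : ℝ}
    {M : ℕ} {S : Set ℕ} (hη0 : 0 < η) (hη1 : η < 1) (hδ : 0 < δ) (hCw : 0 ≤ Cw) (hR : 0 < R)
    (hlow : ∀ k, ∀ w ∈ pDisc (ζ k) η, δ ≤ (1 - ‖w‖ ^ 2) * ‖deriv B w‖)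
    (hquasi : ∀ w, {k | w ∈ pDisc (ζ k) η}.encard ≤ M)
    (hweak : ∀ lam > (0 : ℝ), muP p {w | lam < ‖deriv B w‖} ≤ ENNReal.ofReal (Cw / lam ^ p))
    (hS : ∀ k ∈ S, R < 1 - ‖ζ k‖ ∧ 1 - ‖ζ k‖ ≤ 2 * R) :
    S.Finite ∧ (S.ncard : ℝ) ≤
      M * Cw / ((δ * (1 - η ^ 2) / 16) ^ p * (4 ^ (-|p - 2|) * π * η ^ 2 / 4)) := by
  set c := δ * (1 - η ^ 2) / 16
  set κ := 4 ^ (-|p - 2|) * π * η ^ 2 / 4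
  have hc : 0 < c := by
    have : 0 < 1 - η ^ 2 := by nlinarith
    positivity
  have hκ : 0 < κ := by positivity
  have hcp : 0 < c ^ p := Real.rpow_pos_of_pos hc p
  have hRp : 0 < R ^ p := Real.rpow_pos_of_pos hR p
  have hlam : 0 < c / R := div_pos hc hR
  obtain ⟨hfin, hcard⟩ := finite_and_ncard_mul_le_of_bounded_overlap (muP p)
    (D := fun k => pDisc (ζ k) η) (E := {w | c / R < ‖deriv B w‖}) (m := .ofReal (κ * R ^ p))
    (fun k _ => (isOpen_pDisc _ _).measurableSet) hquasi
    (fun k hk => ofReal_le_muP_pDisc hη0.le hη1.le (hS k hk).1 (hS k hk).2)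
    (fun k hk => pDisc_subset_setOf_lt_norm_deriv (by linarith [hS k hk]) hδ (hS k hk).2 (hlow k))
    (ENNReal.ofReal_pos.2 (by positivity)).ne'
    (ne_top_of_le_ne_top ENNReal.ofReal_ne_top (hweak _ hlam))
  refine ⟨hfin, ?_⟩
  have hmeasure :
      ENNReal.ofReal (S.ncard * (κ * R ^ p)) ≤ ENNReal.ofReal (M * (Cw / (c / R) ^ p)) := by
    rw [ENNReal.ofReal_mul (Nat.cast_nonneg _), ENNReal.ofReal_mul (Nat.cast_nonneg _),
      ENNReal.ofReal_natCast, ENNReal.ofReal_natCast]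
    exact hcard.trans (by gcongr; exact hweak _ hlam)
  have hreal := (ENNReal.ofReal_le_ofReal_iff (by positivity)).1 hmeasure
  rw [Real.div_rpow hc.le hR.le, div_div_eq_mul_div] at hreal
  rw [le_div_iff₀ (by positivity)]
  refine le_of_mul_le_mul_right ?_ hRp
  calc (S.ncard : ℝ) * (c ^ p * κ) * R ^ p = S.ncard * (κ * R ^ p) * c ^ p := by ring
    _ ≤ M * (Cw * R ^ p / c ^ p) * c ^ p := by gcongr
    _ = M * Cw * R ^ p := by field_simp

theorem bounded_points_per_annulus_general (B : ℂ → ℂ)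
    (ζ : ℕ → ℂ) (η δs : ℝ) (M : ℕ)
    (hη : η ∈ Set.Ioc (0:ℝ) 1) (hδ : δs ∈ Set.Ioc (0:ℝ) 1)
    (hlow : ∀ k, ∀ w ∈ pDisc (ζ k) η, δs ≤ (1 - ‖w‖^2) * ‖deriv B w‖)
    (hquasi : ∀ w : ℂ, {k | w ∈ pDisc (ζ k) η}.Finite ∧ {k | w ∈ pDisc (ζ k) η}.ncard ≤ M)
    (p : ℝ)
    (hw : ∃ Cw > (0:ℝ), ∀ lam > (0:ℝ),
      muP p {w | lam < ‖deriv B w‖} ≤ ENNReal.ofReal (Cw / lam ^ p)) :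
    ∃ N : ℕ, ∀ j : ℕ,
      {k | (2:ℝ) ^ (-(j:ℝ)) < 1 - ‖ζ k‖ ∧ 1 - ‖ζ k‖ ≤ (2:ℝ) ^ (-(j:ℝ) + 1)}.Finite ∧
      {k | (2:ℝ) ^ (-(j:ℝ)) < 1 - ‖ζ k‖ ∧ 1 - ‖ζ k‖ ≤ (2:ℝ) ^ (-(j:ℝ) + 1)}.ncard ≤ N := by
  obtain ⟨Cw, hCw0, hweak⟩ := hw
  -- Shrinking the discs to radius `η / 2 < 1` preserves both hypotheses and gives `1 - (η/2)² > 0`.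
  have hshrink : ∀ k, pDisc (ζ k) (η / 2) ⊆ pDisc (ζ k) η := fun k =>
    pDisc_mono (by linarith [hη.1])
  have hquasi' : ∀ w, {k | w ∈ pDisc (ζ k) (η / 2)}.encard ≤ M := fun w =>
    calc {k | w ∈ pDisc (ζ k) (η / 2)}.encard
        ≤ {k | w ∈ pDisc (ζ k) η}.encard := Set.encard_le_encard fun k hk => hshrink k hk
      _ = {k | w ∈ pDisc (ζ k) η}.ncard := (hquasi w).1.cast_ncard_eq.symm
      _ ≤ M := by exact_mod_cast (hquasi w).2
  refine ⟨⌊M * Cw /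
    ((δs * (1 - (η / 2) ^ 2) / 16) ^ p * (4 ^ (-|p - 2|) * π * (η / 2) ^ 2 / 4))⌋₊, fun j => ?_⟩
  have hdouble : (2 : ℝ) ^ (-(j : ℝ) + 1) = 2 * 2 ^ (-(j : ℝ)) := by
    rw [Real.rpow_add two_pos, Real.rpow_one, mul_comm]
  obtain ⟨hfin, hcard⟩ := finite_and_ncard_le_of_forall_mem_annulus (by linarith [hη.1])
    (by linarith [hη.2]) hδ.1 hCw0.le (Real.rpow_pos_of_pos two_pos _)
    (fun k w hw => hlow k w (hshrink k hw)) hquasi' hweak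
    (S := {k | (2:ℝ) ^ (-(j:ℝ)) < 1 - ‖ζ k‖ ∧ 1 - ‖ζ k‖ ≤ (2:ℝ) ^ (-(j:ℝ) + 1)})
    fun k hk => ⟨hk.1, hdouble ▸ hk.2⟩
  exact ⟨hfin, Nat.le_floor hcard⟩

theorem bounded_points_per_annulus (B : ℂ → ℂ) (hB : IsBlaschkeProduct B)
    (ζ : ℕ → ℂ) (η δs : ℝ) (M : ℕ)
    (hη : η ∈ Set.Ioc (0:ℝ) 1) (hδ : δs ∈ Set.Ioc (0:ℝ) 1)
    (hζ : ∀ k, ζ k ∈ Metric.ball (0:ℂ) 1)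
    (hlow : ∀ k, ∀ w ∈ pDisc (ζ k) η, δs ≤ (1 - ‖w‖^2) * ‖deriv B w‖)
    (hquasi : ∀ w : ℂ, {k | w ∈ pDisc (ζ k) η}.Finite ∧ {k | w ∈ pDisc (ζ k) η}.ncard ≤ M)
    (p : ℝ) (hp : 1 < p)
    (hw : ∃ Cw > (0:ℝ), ∀ lam > (0:ℝ),
      muP p {w | lam < ‖deriv B w‖} ≤ ENNReal.ofReal (Cw / lam ^ p)) :
    ∃ N : ℕ, ∀ j : ℕ,
      {k | (2:ℝ) ^ (-(j:ℝ)) < 1 - ‖ζ k‖ ∧ 1 - ‖ζ k‖ ≤ (2:ℝ) ^ (-(j:ℝ) + 1)}.Finite ∧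
      {k | (2:ℝ) ^ (-(j:ℝ)) < 1 - ‖ζ k‖ ∧ 1 - ‖ζ k‖ ≤ (2:ℝ) ^ (-(j:ℝ) + 1)}.ncard ≤ N :=
  bounded_points_per_annulus_general B ζ η δs M hη hδ hlow hquasi p hw
end
end
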